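/- arXiv:1211.5488 — 8 statements merged into one kernel-verified Lean document; each statement's English description precedes it below -/
import Mathlib

section
/- Let X and Y be independent exponential random variables with the same rate γ > 0, let σ = 2·min(X,Y)/(X+Y) and P = X+Y. Then for every 0 < ε < 1 and every p > 0, P(σ > ε | P < p) = 1 - ε. -/
/-!
The joint density `γ² e^{-γ(x+y)}` of `(X, Y)` on the positive quadrant depends only on the
perimeter `x + y`. Hence, cutting the plane along the lines `x + y = s` (a shear, which preserves
Lebesgue measure), `(X, Y)` is uniform on each segment `{x + y = s, x, y ≥ 0}`. On that segment
`σ > ε` carves out the middle subsegment `ε s / 2 < y < s - ε s / 2`, of relative length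
`1 - ε`, so the mass of `{σ > ε, X + Y < p}` is `1 - ε` times the mass of `{X + Y < p}`.
-/

open MeasureTheory ProbabilityTheory Real Set
open scoped ENNReal

theorem withDensity_prod_withDensity_apply_eq_lintegral_sub {f g : ℝ → ℝ≥0∞}
    (hf : Measurable f) (hg : Measurable g) {A : Set (ℝ × ℝ)} (hA : MeasurableSet A) :
    (volume.withDensity f).prod (volume.withDensity g) A =
      ∫⁻ s, ∫⁻ y in {y | (s - y, y) ∈ A}, f (s - y) * g y := by
  have hshear := measurePreserving_sub_prod (volume : Measure ℝ) (volume : Measure ℝ)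
  rw [prod_withDensity hf hg, withDensity_apply _ hA, ← lintegral_indicator hA,
    ← hshear.lintegral_comp (by fun_prop (disch := exact hA)),
    lintegral_prod _ (by fun_prop (disch := exact hA))]
  congr 1 with s
  have hslice : MeasurableSet {y : ℝ | (s - y, y) ∈ A} :=
    (by fun_prop : Measurable fun y : ℝ => (s - y, y)) hA
  rw [← lintegral_indicator hslice]
  rfl

theorem exponentialPDF_sub_mul_exponentialPDF {γ : ℝ} (hγ : 0 ≤ γ) (s y : ℝ) :
    exponentialPDF γ (s - y) * exponentialPDF γ y =
      (Icc 0 s).indicator (fun _ => ENNReal.ofReal (γ ^ 2 * rexp (-(γ * s)))) y := by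
  by_cases hy : y ∈ Icc 0 s
  · rw [indicator_of_mem hy, exponentialPDF_of_nonneg (sub_nonneg.2 hy.2),
      exponentialPDF_of_nonneg hy.1, ← ENNReal.ofReal_mul (by positivity)]
    congr 1
    rw [mul_mul_mul_comm, ← Real.exp_add]
    ring_nf
  · rw [indicator_of_notMem hy]
    rcases not_and_or.1 hy with hy | hy
    · simp [exponentialPDF_of_neg (not_le.1 hy)]
    · simp [exponentialPDF_of_neg (sub_neg.2 (not_le.1 hy))]

theorem expMeasure_prod_apply {γ : ℝ} (hγ : 0 ≤ γ) {A : Set (ℝ × ℝ)}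
    (hA : MeasurableSet A) :
    (expMeasure γ).prod (expMeasure γ) A =
      ∫⁻ s, ENNReal.ofReal (γ ^ 2 * rexp (-(γ * s))) *
        volume (Icc 0 s ∩ {y | (s - y, y) ∈ A}) := by
  have hpdf : Measurable (exponentialPDF γ) := (measurable_exponentialPDFReal γ).ennreal_ofReal
  change (volume.withDensity (exponentialPDF γ)).prod
    (volume.withDensity (exponentialPDF γ)) A = _
  rw [withDensity_prod_withDensity_apply_eq_lintegral_sub hpdf hpdf hA]
  congr 1 with s
  simp_rw [exponentialPDF_sub_mul_exponentialPDF hγ]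
  rw [setLIntegral_indicator measurableSet_Icc, setLIntegral_const, mul_comm]

theorem volume_Icc_inter_setOf_lt_two_mul_min_div {ε : ℝ} (hε : 0 ≤ ε) (s : ℝ) :
    volume (Icc 0 s ∩ {y | ε < 2 * min (s - y) y / s}) =
      ENNReal.ofReal (1 - ε) * volume (Icc 0 s) := by
  rcases le_or_gt s 0 with hs | hs
  · have hnull : volume (Icc 0 s) = 0 := by simp [hs]
    rw [hnull, mul_zero]
    exact measure_mono_null inter_subset_left hnull
  have hslice :
      Icc 0 s ∩ {y | ε < 2 * min (s - y) y / s} = Ioo (ε * s / 2) (s - ε * s / 2) := by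
    ext y
    simp only [mem_inter_iff, mem_ofPred_eq, mem_Icc, mem_Ioo, lt_div_iff₀ hs,
      mul_min_of_nonneg _ _ (zero_le_two : (0 : ℝ) ≤ 2), lt_min_iff]
    constructor
    · rintro ⟨-, h1, h2⟩; constructor <;> linarith
    · rintro ⟨h1, h2⟩
      have : 0 ≤ ε * s := by positivity
      refine ⟨⟨?_, ?_⟩, ?_, ?_⟩ <;> linarith
  rw [hslice, Real.volume_Ioo, Real.volume_Icc, sub_zero, ← ENNReal.ofReal_mul' hs.le]
  congr 1; ring

theorem measurableSet_sum_lt (p : ℝ) : MeasurableSet {q : ℝ × ℝ | q.1 + q.2 < p} :=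
  measurableSet_lt (by fun_prop) measurable_const

theorem measurableSet_two_mul_min_div_gt (ε : ℝ) :
    MeasurableSet {q : ℝ × ℝ | 2 * min q.1 q.2 / (q.1 + q.2) > ε} :=
  measurableSet_lt measurable_const (by fun_prop)

theorem expMeasure_prod_sum_lt_inter_two_mul_min_div_gt {γ ε : ℝ} (hγ : 0 ≤ γ)
    (hε : 0 ≤ ε) (p : ℝ) :
    (expMeasure γ).prod (expMeasure γ)
        ({q : ℝ × ℝ | q.1 + q.2 < p} ∩ {q | 2 * min q.1 q.2 / (q.1 + q.2) > ε}) =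
      ENNReal.ofReal (1 - ε) * (expMeasure γ).prod (expMeasure γ) {q | q.1 + q.2 < p} := by
  rw [expMeasure_prod_apply hγ
      ((measurableSet_sum_lt p).inter (measurableSet_two_mul_min_div_gt ε)),
    expMeasure_prod_apply hγ (measurableSet_sum_lt p),
    ← lintegral_const_mul' _ _ ENNReal.ofReal_ne_top]
  congr 1 with s
  by_cases hs : s < p
  · simp only [mem_inter_iff, mem_ofPred_eq, sub_add_cancel, hs, true_and, gt_iff_lt,
      ofPred_true, inter_univ]
    rw [volume_Icc_inter_setOf_lt_two_mul_min_div hε, mul_left_comm]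
  · simp [hs]

theorem expMeasure_prod_sum_lt_ne_zero {γ p : ℝ} (hγ : 0 < γ) (hp : 0 < p) :
    (expMeasure γ).prod (expMeasure γ) {q : ℝ × ℝ | q.1 + q.2 < p} ≠ 0 := by
  have := isProbabilityMeasure_expMeasure hγ
  have hIic : expMeasure γ (Iic (p / 3)) ≠ 0 := by
    have hcdf : 0 < cdf (expMeasure γ) (p / 3) := by
      rw [cdf_expMeasure_eq hγ, if_pos (by positivity), sub_pos, exp_lt_one_iff, neg_lt_zero]
      positivity
    intro h0
    simp [cdf_eq_real, Measure.real, h0] at hcdf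
  intro h0
  have hsquare : (expMeasure γ).prod (expMeasure γ) (Iic (p / 3) ×ˢ Iic (p / 3)) = 0 :=
    measure_mono_null
      (fun q ⟨h1, h2⟩ => show q.1 + q.2 < p by rw [mem_Iic] at h1 h2; linarith) h0
  rw [Measure.prod_prod, mul_self_eq_zero] at hsquare
  exact hIic hsquare

theorem ProbabilityTheory.cond_preimage_apply_preimage {Ω α : Type*} [MeasurableSpace Ω]
    [MeasurableSpace α] (μ : Measure Ω) {Z : Ω → α} (hZ : Measurable Z) {s t : Set α}
    (hs : MeasurableSet s) (ht : MeasurableSet t) :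
    μ[|Z ⁻¹' s] (Z ⁻¹' t) = (μ.map Z)[|s] t := by
  rw [cond_apply (hZ hs), cond_apply hs, Measure.map_apply hZ hs,
    Measure.map_apply hZ (hs.inter ht), preimage_inter]

theorem expMeasure_prod_cond_sum_lt_apply_two_mul_min_div_gt {γ ε p : ℝ} (hγ : 0 < γ)
    (hε : 0 ≤ ε) (hp : 0 < p) :
    ((expMeasure γ).prod (expMeasure γ))[|{q : ℝ × ℝ | q.1 + q.2 < p}]
        {q | 2 * min q.1 q.2 / (q.1 + q.2) > ε} = ENNReal.ofReal (1 - ε) := by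
  have := isProbabilityMeasure_expMeasure hγ
  rw [cond_apply (measurableSet_sum_lt p),
    expMeasure_prod_sum_lt_inter_two_mul_min_div_gt hγ.le hε, mul_comm (ENNReal.ofReal _),
    ENNReal.inv_mul_cancel_left (expMeasure_prod_sum_lt_ne_zero hγ hp) (measure_ne_top _ _)]

theorem shape_uniform_given_small_perimeter_general
    {Ω : Type*} [MeasurableSpace Ω] (μ : Measure Ω) [IsProbabilityMeasure μ]
    (γ : ℝ) (hγ : 0 < γ) (X Y : Ω → ℝ)
    (hX : Measurable X) (hY : Measurable Y)
    (hXd : μ.map X = expMeasure γ) (hYd : μ.map Y = expMeasure γ)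
    (hind : IndepFun X Y μ)
    (ε p : ℝ) (hε0 : 0 < ε) (hp : 0 < p) :
    (μ[|{ω | X ω + Y ω < p}]) {ω | 2 * min (X ω) (Y ω) / (X ω + Y ω) > ε} =
      ENNReal.ofReal (1 - ε) := by
  have hlaw : μ.map (fun ω => (X ω, Y ω)) = (expMeasure γ).prod (expMeasure γ) := by
    rw [(indepFun_iff_map_prod_eq_prod_map_map hX.aemeasurable hY.aemeasurable).1 hind,
      hXd, hYd]
  have h := cond_preimage_apply_preimage μ (hX.prodMk hY) (measurableSet_sum_lt p)
    (measurableSet_two_mul_min_div_gt ε)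
  rw [hlaw, expMeasure_prod_cond_sum_lt_apply_two_mul_min_div_gt hγ hε0.le hp] at h
  exact h

theorem shape_uniform_given_small_perimeter
    {Ω : Type*} [MeasurableSpace Ω] (μ : Measure Ω) [IsProbabilityMeasure μ]
    (γ : ℝ) (hγ : 0 < γ) (X Y : Ω → ℝ)
    (hX : Measurable X) (hY : Measurable Y)
    (hXd : μ.map X = expMeasure γ) (hYd : μ.map Y = expMeasure γ)
    (hind : IndepFun X Y μ)
    (ε p : ℝ) (hε0 : 0 < ε) (hε1 : ε < 1) (hp : 0 < p) :
    (μ[|{ω | X ω + Y ω < p}]) {ω | 2 * min (X ω) (Y ω) / (X ω + Y ω) > ε} =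
      ENNReal.ofReal (1 - ε) :=
  shape_uniform_given_small_perimeter_general μ γ hγ X Y hX hY hXd hYd hind ε p hε0 hp
end

section
/- Let X, Y be i.i.d. exponential random variables with rate 1. Then P(XY < a) = 1 - a ∫_2^∞ e^{-√a · s} √(s² - 4) ds for every a > 0. -/
/-!
Conditioning on `X` gives `P(XY ≥ a) = ∫₀^∞ e^{-x - a/x} dx`, which the substitution `x = √a t`
turns into `√a ∫₀^∞ e^{-√a (t + 1/t)} dt`. The map `t ↦ t + 1/t` covers `(2, ∞)` twice, with
inverse branches `(s ± √(s² - 4)) / 2` whose Jacobians add up to `s / √(s² - 4)`; this gives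
`√a ∫₂^∞ e^{-√a s} s / √(s² - 4) ds`, and integrating by parts against
`d/ds √(s² - 4) = s / √(s² - 4)` yields `a ∫₂^∞ e^{-√a s} √(s² - 4) ds`.
-/

open MeasureTheory ProbabilityTheory Real Set Filter Topology

namespace ExpProduct

section Roots

variable {s t : ℝ}

lemma sqrt_sq_sub_four_pos (hs : 2 < s) : 0 < √(s ^ 2 - 4) :=
  sqrt_pos.mpr (by nlinarith)

lemma sqrt_sq_sub_four_lt (hs : 2 < s) : √(s ^ 2 - 4) < s :=
  (sqrt_lt' (by linarith)).mpr (by linarith)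

lemma hasDerivAt_sqrt_sq_sub_four (hs : 2 < s) :
    HasDerivAt (fun s ↦ √(s ^ 2 - 4)) (s / √(s ^ 2 - 4)) s := by
  refine (((hasDerivAt_pow 2 s).sub_const 4).sqrt (by nlinarith)).congr_deriv ?_
  push_cast
  ring

-- The two solutions of `t + t⁻¹ = s`, i.e. the roots of `t² - s t + 1`.
noncomputable def upperRoot (s : ℝ) : ℝ := (s + √(s ^ 2 - 4)) / 2

noncomputable def lowerRoot (s : ℝ) : ℝ := (s - √(s ^ 2 - 4)) / 2

lemma upperRoot_add_lowerRoot (s : ℝ) : upperRoot s + lowerRoot s = s := by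
  unfold upperRoot lowerRoot; ring

lemma upperRoot_mul_lowerRoot (hs : 2 ≤ s) : upperRoot s * lowerRoot s = 1 := by
  have h := sq_sqrt (by nlinarith : (0 : ℝ) ≤ s ^ 2 - 4)
  unfold upperRoot lowerRoot; nlinarith

lemma upperRoot_pos (hs : 2 < s) : 0 < upperRoot s := by
  have := sqrt_sq_sub_four_pos hs
  unfold upperRoot; linarith

lemma lowerRoot_pos (hs : 2 < s) : 0 < lowerRoot s := by
  have := sqrt_sq_sub_four_lt hs
  unfold lowerRoot; linarith

lemma upperRoot_add_inv (hs : 2 ≤ s) : upperRoot s + (upperRoot s)⁻¹ = s := by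
  rw [inv_eq_of_mul_eq_one_right (upperRoot_mul_lowerRoot hs), upperRoot_add_lowerRoot]

lemma lowerRoot_add_inv (hs : 2 ≤ s) : lowerRoot s + (lowerRoot s)⁻¹ = s := by
  rw [inv_eq_of_mul_eq_one_left (upperRoot_mul_lowerRoot hs), add_comm,
    upperRoot_add_lowerRoot]

lemma two_lt_add_inv (ht : 0 < t) (ht1 : t ≠ 1) : 2 < t + t⁻¹ := by
  have h : t + t⁻¹ - 2 = (t - 1) ^ 2 / t := by field_simp; ring
  have := sub_ne_zero.mpr ht1
  have : 0 < (t - 1) ^ 2 / t := by positivity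
  linarith

lemma sqrt_add_inv_sq_sub_four (ht : t ≠ 0) : √((t + t⁻¹) ^ 2 - 4) = |t - t⁻¹| := by
  rw [← sqrt_sq_eq_abs]
  congr 1
  field_simp
  ring

lemma upperRoot_add_inv_self (ht : 1 ≤ t) : upperRoot (t + t⁻¹) = t := by
  have : t⁻¹ ≤ t := (inv_le_one_of_one_le₀ ht).trans ht
  rw [upperRoot, sqrt_add_inv_sq_sub_four (by positivity), abs_of_nonneg (by linarith)]
  ring

lemma lowerRoot_add_inv_self (ht : 0 < t) (ht1 : t ≤ 1) : lowerRoot (t + t⁻¹) = t := by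
  have : t ≤ t⁻¹ := ht1.trans (one_le_inv₀ ht |>.mpr ht1)
  rw [lowerRoot, sqrt_add_inv_sq_sub_four ht.ne', abs_of_nonpos (by linarith)]
  ring

lemma image_upperRoot : upperRoot '' Ioi 2 = Ioi 1 := by
  refine Subset.antisymm ?_ fun t (ht : 1 < t) ↦ ?_
  · rintro _ ⟨s, hs : 2 < s, rfl⟩
    have := sqrt_sq_sub_four_pos hs
    show 1 < upperRoot s
    unfold upperRoot; linarith
  · exact ⟨t + t⁻¹, two_lt_add_inv (by linarith) ht.ne', upperRoot_add_inv_self ht.le⟩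

lemma image_lowerRoot : lowerRoot '' Ioi 2 = Ioo 0 1 := by
  refine Subset.antisymm ?_ fun t ⟨ht0, ht1⟩ ↦ ?_
  · rintro _ ⟨s, hs : 2 < s, rfl⟩
    have : s - 2 < √(s ^ 2 - 4) := (lt_sqrt (by linarith)).mpr (by nlinarith)
    refine ⟨lowerRoot_pos hs, ?_⟩
    unfold lowerRoot; linarith
  · exact ⟨t + t⁻¹, two_lt_add_inv ht0 ht1.ne, lowerRoot_add_inv_self ht0 ht1.le⟩

lemma hasDerivAt_upperRoot (hs : 2 < s) :
    HasDerivAt upperRoot (upperRoot s / √(s ^ 2 - 4)) s := by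
  refine (((hasDerivAt_id s).add (hasDerivAt_sqrt_sq_sub_four hs)).div_const 2).congr_deriv ?_
  have := (sqrt_sq_sub_four_pos hs).ne'
  unfold upperRoot
  field_simp
  ring

lemma hasDerivAt_lowerRoot (hs : 2 < s) :
    HasDerivAt lowerRoot (-(lowerRoot s / √(s ^ 2 - 4))) s := by
  refine (((hasDerivAt_id s).sub (hasDerivAt_sqrt_sq_sub_four hs)).div_const 2).congr_deriv ?_
  have := (sqrt_sq_sub_four_pos hs).ne'
  unfold lowerRoot
  field_simp
  ring

end Roots

section ChangeOfVariables

variable {E : Type*} [NormedAddCommGroup E] [NormedSpace ℝ E]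

lemma integrableOn_image_comp_iff_of_leftInvOn {S : Set ℝ} (hS : MeasurableSet S)
    {r r' φ : ℝ → ℝ} (hr : ∀ s ∈ S, HasDerivWithinAt r (r' s) S s) (hφ : LeftInvOn φ r S)
    (f : ℝ → E) :
    IntegrableOn (fun t ↦ f (φ t)) (r '' S) ↔ IntegrableOn (fun s ↦ |r' s| • f s) S := by
  rw [integrableOn_image_iff_integrableOn_abs_deriv_smul hS hr hφ.injOn]
  exact integrableOn_congr_fun (fun s hs ↦ by rw [hφ hs]) hS

lemma setIntegral_image_comp_of_leftInvOn {S : Set ℝ} (hS : MeasurableSet S)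
    {r r' φ : ℝ → ℝ} (hr : ∀ s ∈ S, HasDerivWithinAt r (r' s) S s) (hφ : LeftInvOn φ r S)
    (f : ℝ → E) :
    ∫ t in r '' S, f (φ t) = ∫ s in S, |r' s| • f s := by
  rw [integral_image_eq_integral_abs_deriv_smul hS hr hφ.injOn]
  exact setIntegral_congr_fun hS fun s hs ↦ by rw [hφ hs]

lemma leftInvOn_upperRoot : LeftInvOn (fun t ↦ t + t⁻¹) upperRoot (Ioi 2) :=
  fun _ hs ↦ upperRoot_add_inv (le_of_lt hs)

lemma leftInvOn_lowerRoot : LeftInvOn (fun t ↦ t + t⁻¹) lowerRoot (Ioi 2) :=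
  fun _ hs ↦ lowerRoot_add_inv (le_of_lt hs)

lemma abs_deriv_upperRoot_add_abs_deriv_lowerRoot {s : ℝ} (hs : 2 < s) :
    |upperRoot s / √(s ^ 2 - 4)| + |-(lowerRoot s / √(s ^ 2 - 4))| = s / √(s ^ 2 - 4) := by
  have hw := sqrt_sq_sub_four_pos hs
  rw [abs_neg, abs_of_pos (div_pos (upperRoot_pos hs) hw),
    abs_of_pos (div_pos (lowerRoot_pos hs) hw), ← add_div, upperRoot_add_lowerRoot]

variable {f : ℝ → E}

lemma integrableOn_abs_deriv_upperRoot_smul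
    (hf : IntegrableOn (fun t ↦ f (t + t⁻¹)) (Ioi 0)) :
    IntegrableOn (fun s ↦ |upperRoot s / √(s ^ 2 - 4)| • f s) (Ioi 2) := by
  refine (integrableOn_image_comp_iff_of_leftInvOn measurableSet_Ioi
    (fun s hs ↦ (hasDerivAt_upperRoot hs).hasDerivWithinAt) leftInvOn_upperRoot f).mp ?_
  rw [image_upperRoot]
  exact hf.mono_set (Ioi_subset_Ioi zero_le_one)

lemma integrableOn_abs_deriv_lowerRoot_smul
    (hf : IntegrableOn (fun t ↦ f (t + t⁻¹)) (Ioi 0)) :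
    IntegrableOn (fun s ↦ |-(lowerRoot s / √(s ^ 2 - 4))| • f s) (Ioi 2) := by
  refine (integrableOn_image_comp_iff_of_leftInvOn measurableSet_Ioi
    (fun s hs ↦ (hasDerivAt_lowerRoot hs).hasDerivWithinAt) leftInvOn_lowerRoot f).mp ?_
  rw [image_lowerRoot]
  exact hf.mono_set Ioo_subset_Ioi_self

lemma integrableOn_Ioi_two_div_sqrt_smul
    (hf : IntegrableOn (fun t ↦ f (t + t⁻¹)) (Ioi 0)) :
    IntegrableOn (fun s ↦ (s / √(s ^ 2 - 4)) • f s) (Ioi 2) :=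
  ((integrableOn_abs_deriv_upperRoot_smul hf).add
    (integrableOn_abs_deriv_lowerRoot_smul hf)).congr_fun
    (fun s hs ↦ by rw [Pi.add_apply, ← add_smul, abs_deriv_upperRoot_add_abs_deriv_lowerRoot hs])
    measurableSet_Ioi

theorem integral_Ioi_zero_comp_add_inv (hf : IntegrableOn (fun t ↦ f (t + t⁻¹)) (Ioi 0)) :
    ∫ t in Ioi 0, f (t + t⁻¹) = ∫ s in Ioi 2, (s / √(s ^ 2 - 4)) • f s := by
  have hsplit : ∫ t in Ioi 0, f (t + t⁻¹) =
      (∫ t in Ioi 1, f (t + t⁻¹)) + ∫ t in Ioo 0 1, f (t + t⁻¹) := by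
    rw [← Ioo_union_Ici_eq_Ioi zero_lt_one, setIntegral_union (s := Ioo 0 1) (t := Ici 1)
      (disjoint_left.mpr fun _ ht ht' ↦ not_le.mpr ht.2 ht') measurableSet_Ici
      (hf.mono_set Ioo_subset_Ioi_self) (hf.mono_set (Ici_subset_Ioi.mpr zero_lt_one)),
      integral_Ici_eq_integral_Ioi, add_comm]
  rw [hsplit, ← image_upperRoot, ← image_lowerRoot,
    setIntegral_image_comp_of_leftInvOn measurableSet_Ioi
      (fun s hs ↦ (hasDerivAt_upperRoot hs).hasDerivWithinAt) leftInvOn_upperRoot f,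
    setIntegral_image_comp_of_leftInvOn measurableSet_Ioi
      (fun s hs ↦ (hasDerivAt_lowerRoot hs).hasDerivWithinAt) leftInvOn_lowerRoot f,
    ← integral_add (integrableOn_abs_deriv_upperRoot_smul hf)
      (integrableOn_abs_deriv_lowerRoot_smul hf)]
  exact setIntegral_congr_fun measurableSet_Ioi fun s hs ↦ by
    rw [← add_smul, abs_deriv_upperRoot_add_abs_deriv_lowerRoot hs]

end ChangeOfVariables

section Laplace

variable {b : ℝ}

lemma exp_neg_mul_mul_sqrt_sq_sub_four_le {s : ℝ} (hs : 2 < s) :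
    exp (-(b * s)) * √(s ^ 2 - 4) ≤ s * exp (-(b * s)) := by
  rw [mul_comm s]
  exact mul_le_mul_of_nonneg_left (sqrt_sq_sub_four_lt hs).le (exp_pos _).le

lemma integrableOn_exp_neg_mul_mul_sqrt_sq_sub_four (hb : 0 < b) :
    IntegrableOn (fun s ↦ exp (-(b * s)) * √(s ^ 2 - 4)) (Ioi 2) := by
  have hdom : IntegrableOn (fun s ↦ s * exp (-(b * s))) (Ioi 2) := by
    simpa only [rpow_one, neg_mul] using
      (integrableOn_rpow_mul_exp_neg_mul_rpow (s := 1) (by norm_num) one_pos hb).mono_set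
        (Ioi_subset_Ioi zero_le_two)
  refine hdom.mono' (by fun_prop) ?_
  filter_upwards [ae_restrict_mem measurableSet_Ioi] with s (hs : 2 < s)
  rw [norm_of_nonneg (by positivity)]
  exact exp_neg_mul_mul_sqrt_sq_sub_four_le hs

lemma tendsto_exp_neg_mul_mul_sqrt_sq_sub_four (hb : 0 < b) :
    Tendsto (fun s ↦ exp (-(b * s)) * √(s ^ 2 - 4)) atTop (𝓝 0) := by
  refine squeeze_zero' (.of_forall fun s ↦ by positivity) ?_
    (by simpa only [rpow_one, neg_mul] using tendsto_rpow_mul_exp_neg_mul_atTop_nhds_zero 1 b hb)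
  filter_upwards [eventually_gt_atTop 2] with s hs
  exact exp_neg_mul_mul_sqrt_sq_sub_four_le hs

lemma integral_div_sqrt_sq_sub_four_mul_exp (hb : 0 < b)
    (hint : IntegrableOn (fun s ↦ s / √(s ^ 2 - 4) * exp (-(b * s))) (Ioi 2)) :
    ∫ s in Ioi 2, s / √(s ^ 2 - 4) * exp (-(b * s)) =
      b * ∫ s in Ioi 2, exp (-(b * s)) * √(s ^ 2 - 4) := by
  have hu : ∀ s ∈ Ioi (2 : ℝ), HasDerivAt (fun s ↦ exp (-(b * s))) (-b * exp (-(b * s))) s :=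
    fun s _ ↦ by simpa [mul_comm] using ((hasDerivAt_id s).const_mul b).neg.exp
  have hcont : Continuous fun s : ℝ ↦ exp (-(b * s)) * √(s ^ 2 - 4) := by fun_prop
  have hzero : Tendsto (fun s : ℝ ↦ exp (-(b * s)) * √(s ^ 2 - 4)) (𝓝[>] 2) (𝓝 0) := by
    convert (hcont.tendsto 2).mono_left nhdsWithin_le_nhds using 2
    norm_num
  have h := integral_Ioi_mul_deriv_eq_deriv_mul hu (fun s hs ↦ hasDerivAt_sqrt_sq_sub_four hs)
    (hint.congr_fun (fun s _ ↦ mul_comm _ _) measurableSet_Ioi)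
    (IntegrableOn.congr_fun ((integrableOn_exp_neg_mul_mul_sqrt_sq_sub_four hb).const_mul (-b))
      (fun s _ ↦ (mul_assoc _ _ _).symm) measurableSet_Ioi)
    hzero (tendsto_exp_neg_mul_mul_sqrt_sq_sub_four hb)
  simp only [mul_assoc, integral_const_mul] at h
  rw [setIntegral_congr_fun measurableSet_Ioi (fun s _ ↦ mul_comm _ _), h]
  ring

lemma integrableOn_exp_neg_mul_add_div (hb : 0 < b) {c : ℝ} (hc : 0 ≤ c) :
    IntegrableOn (fun x ↦ exp (-(b * x + c / x))) (Ioi 0) := by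
  refine (exp_neg_integrableOn_Ioi 0 hb).mono' (by fun_prop) ?_
  filter_upwards [ae_restrict_mem measurableSet_Ioi] with x (hx : 0 < x)
  rw [norm_of_nonneg (exp_pos _).le, exp_le_exp, neg_mul, neg_le_neg_iff]
  have : 0 ≤ c / x := by positivity
  linarith

theorem integral_exp_neg_add_div {a : ℝ} (ha : 0 < a) :
    ∫ x in Ioi 0, exp (-(x + a / x)) = a * ∫ s in Ioi 2, exp (-(√a * s)) * √(s ^ 2 - 4) := by
  set b := √a
  have hb : 0 < b := sqrt_pos.mpr ha
  have hab : b * b = a := mul_self_sqrt ha.le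
  have hscale : ∫ x in Ioi 0, exp (-(x + a / x)) = b * ∫ t in Ioi 0, exp (-(b * (t + t⁻¹))) := by
    have h := integral_comp_mul_left_Ioi (fun x ↦ exp (-(x + a / x))) 0 hb
    rw [mul_zero, smul_eq_mul] at h
    have hsub : ∫ t in Ioi 0, exp (-(b * (t + t⁻¹))) = b⁻¹ * ∫ x in Ioi 0, exp (-(x + a / x)) := by
      rw [← h]
      refine setIntegral_congr_fun measurableSet_Ioi fun t (ht : 0 < t) ↦ ?_
      rw [← hab]
      field_simp
    rw [hsub, ← mul_assoc, mul_inv_cancel₀ hb.ne', one_mul]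
  have hint : IntegrableOn (fun t ↦ exp (-(b * (t + t⁻¹)))) (Ioi 0) :=
    (integrableOn_exp_neg_mul_add_div hb hb.le).congr_fun
      (fun t _ ↦ by simp only [mul_add, div_eq_mul_inv]) measurableSet_Ioi
  have hint' := integrableOn_Ioi_two_div_sqrt_smul (f := fun s ↦ exp (-(b * s))) hint
  simp only [smul_eq_mul] at hint'
  rw [hscale, integral_Ioi_zero_comp_add_inv (f := fun s ↦ exp (-(b * s))) hint]
  simp only [smul_eq_mul]
  rw [integral_div_sqrt_sq_sub_four_mul_exp hb hint', ← mul_assoc, hab]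

end Laplace

section ExponentialLaw

lemma gammaPDF_one_one_of_nonneg {x : ℝ} (hx : 0 ≤ x) :
    gammaPDF 1 1 x = ENNReal.ofReal (exp (-x)) := by
  rw [gammaPDF_of_nonneg hx]
  norm_num

lemma expMeasure_one_Ici {c : ℝ} (hc : 0 ≤ c) :
    expMeasure 1 (Ici c) = ENNReal.ofReal (exp (-c)) := by
  have hpdf : ∀ x ∈ Ici c, gammaPDF 1 1 x = ENNReal.ofReal (exp (-x)) :=
    fun x hx ↦ gammaPDF_one_one_of_nonneg (hc.trans hx)
  have hint : IntegrableOn (fun x ↦ exp (-x)) (Ici c) :=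
    (integrableOn_Ici_iff_integrableOn_Ioi (by simp)).mpr
      (by simpa using exp_neg_integrableOn_Ioi c one_pos)
  rw [expMeasure, gammaMeasure, withDensity_apply _ measurableSet_Ici,
    setLIntegral_congr_fun measurableSet_Ici hpdf,
    ← ofReal_integral_eq_lintegral_ofReal hint (.of_forall fun _ ↦ (exp_pos _).le),
    integral_Ici_eq_integral_Ioi, integral_exp_neg_Ioi]

lemma expMeasure_one_Iio_zero : expMeasure 1 (Iio 0) = 0 := by
  rw [expMeasure, gammaMeasure, withDensity_apply _ measurableSet_Iio]
  exact lintegral_gammaPDF_of_nonpos le_rfl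

lemma expMeasure_one_setOf_le_mul {a : ℝ} (ha : 0 < a) (x : ℝ) :
    expMeasure 1 {y | a ≤ x * y} =
      (Ioi 0).indicator (fun u ↦ ENNReal.ofReal (exp (-(a / u)))) x := by
  rcases lt_or_ge 0 x with hx | hx
  · have hset : {y | a ≤ x * y} = Ici (a / x) := by
      ext y
      simp [div_le_iff₀' hx]
    rw [indicator_of_mem (show x ∈ Ioi 0 from hx), hset, expMeasure_one_Ici (by positivity)]
  · rw [indicator_of_notMem (show x ∉ Ioi 0 from not_lt.mpr hx)]
    refine measure_mono_null (fun y (hy : a ≤ x * y) ↦ ?_) expMeasure_one_Iio_zero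
    show y < 0
    by_contra! hy0
    nlinarith [mul_nonpos_of_nonpos_of_nonneg hx hy0]

lemma prod_expMeasure_one_setOf_le_mul {a : ℝ} (ha : 0 < a) :
    (expMeasure 1).prod (expMeasure 1) {p | a ≤ p.1 * p.2} =
      ENNReal.ofReal (∫ x in Ioi 0, exp (-(x + a / x))) := by
  have := isProbabilityMeasure_expMeasure (r := 1) one_pos
  have hS : MeasurableSet {p : ℝ × ℝ | a ≤ p.1 * p.2} :=
    measurableSet_le measurable_const (by fun_prop)
  have hint : IntegrableOn (fun x ↦ exp (-(x + a / x))) (Ioi 0) := by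
    simpa using integrableOn_exp_neg_mul_add_div one_pos ha.le
  rw [Measure.prod_apply hS, ofReal_integral_eq_lintegral_ofReal hint
    (.of_forall fun _ ↦ (exp_pos _).le)]
  calc ∫⁻ x, expMeasure 1 {y | a ≤ x * y} ∂expMeasure 1
      = ∫⁻ x in Ioi 0, ENNReal.ofReal (exp (-(a / x))) ∂expMeasure 1 := by
        simp_rw [expMeasure_one_setOf_le_mul ha]
        exact lintegral_indicator measurableSet_Ioi _
    _ = ∫⁻ x in Ioi 0, gammaPDF 1 1 x * ENNReal.ofReal (exp (-(a / x))) :=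
        setLIntegral_withDensity_eq_setLIntegral_mul _ (measurable_gammaPDFReal 1 1).ennreal_ofReal
          (by fun_prop) measurableSet_Ioi
    _ = ∫⁻ x in Ioi 0, ENNReal.ofReal (exp (-(x + a / x))) :=
        setLIntegral_congr_fun measurableSet_Ioi fun x (hx : 0 < x) ↦ by
          rw [gammaPDF_one_one_of_nonneg hx.le, ← ENNReal.ofReal_mul (exp_pos _).le, ← exp_add,
            neg_add]

end ExponentialLaw

end ExpProduct

open ExpProduct in
theorem product_cdf_integral_formula
    {Ω : Type*} [MeasurableSpace Ω] (μ : Measure Ω) [IsProbabilityMeasure μ]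
    (X Y : Ω → ℝ) (hX : Measurable X) (hY : Measurable Y)
    (hXd : μ.map X = expMeasure 1) (hYd : μ.map Y = expMeasure 1)
    (hind : IndepFun X Y μ) (a : ℝ) (ha : 0 < a) :
    μ {ω | X ω * Y ω < a} =
      ENNReal.ofReal
        (1 - a * ∫ s in Set.Ioi (2:ℝ), Real.exp (-(Real.sqrt a * s)) * Real.sqrt (s^2 - 4)) := by
  have hlaw : μ.map (fun ω ↦ (X ω, Y ω)) = (expMeasure 1).prod (expMeasure 1) := by
    rw [(indepFun_iff_map_prod_eq_prod_map_map hX.aemeasurable hY.aemeasurable).mp hind, hXd, hYd]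
  have htail : μ {ω | a ≤ X ω * Y ω} =
      ENNReal.ofReal (a * ∫ s in Ioi 2, exp (-(√a * s)) * √(s ^ 2 - 4)) := by
    rw [← integral_exp_neg_add_div ha, ← prod_expMeasure_one_setOf_le_mul ha, ← hlaw,
      Measure.map_apply (by fun_prop) (measurableSet_le measurable_const (by fun_prop))]
    rfl
  have hnonneg : 0 ≤ a * ∫ s in Ioi 2, exp (-(√a * s)) * √(s ^ 2 - 4) :=
    mul_nonneg ha.le (setIntegral_nonneg measurableSet_Ioi fun _ _ ↦ by positivity)
  have hcompl : {ω | X ω * Y ω < a} = {ω | a ≤ X ω * Y ω}ᶜ := by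
    ext
    simp
  rw [hcompl, prob_compl_eq_one_sub (measurableSet_le measurable_const (by fun_prop)), htail,
    ← ENNReal.ofReal_one, ENNReal.ofReal_sub _ hnonneg]
end

section
/- Define I(a) = a ∫_0^∞ e^{-√a · s} √(s² + 4s) ds for a > 0. Then I(a) → 1 as a → 0⁺. -/
/-!
For `s > 0` we have `s ≤ √(s² + 4s) ≤ s + 2`. Against the kernel `e^{-bs}` on `(0, ∞)` the
functions `s` and `s + 2` integrate to `1/b²` and `1/b² + 2/b`, so with `b = √a` the quantity
`a ∫ e^{-√a s} √(s² + 4s) ds` is squeezed between `1` and `1 + 2√a`.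
-/

open MeasureTheory Real Filter Set
open scoped Nat Topology

lemma integral_pow_mul_exp_neg_mul_Ioi (n : ℕ) {b : ℝ} (hb : 0 < b) :
    ∫ s in Ioi (0 : ℝ), s ^ n * exp (-(b * s)) = n ! / b ^ (n + 1) := by
  have h := integral_rpow_mul_exp_neg_mul_Ioi (n.cast_add_one_pos (α := ℝ)) hb
  simp_rw [add_sub_cancel_right, rpow_natCast] at h
  rw [h, ← rpow_natCast, Gamma_nat_eq_factorial, div_rpow zero_le_one hb.le, one_rpow]
  push_cast
  ring

lemma integrableOn_pow_mul_exp_neg_mul_Ioi (n : ℕ) {b : ℝ} (hb : 0 < b) :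
    IntegrableOn (fun s => s ^ n * exp (-(b * s))) (Ioi 0) :=
  .of_integral_ne_zero <| by rw [integral_pow_mul_exp_neg_mul_Ioi n hb]; positivity

section Sandwich

variable {g : ℝ → ℝ} {b c : ℝ}

lemma integrableOn_exp_neg_mul_mul_of_le (hb : 0 < b)
    (hg : AEStronglyMeasurable g (volume.restrict (Ioi 0)))
    (hg_lower : ∀ s ∈ Ioi (0 : ℝ), s ≤ g s) (hg_upper : ∀ s ∈ Ioi (0 : ℝ), g s ≤ s + c) :
    IntegrableOn (fun s => exp (-(b * s)) * g s) (Ioi 0) := by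
  have hdom : IntegrableOn (fun s => s ^ 1 * exp (-(b * s)) + c * (s ^ 0 * exp (-(b * s))))
      (Ioi 0) :=
    (integrableOn_pow_mul_exp_neg_mul_Ioi 1 hb).add
      ((integrableOn_pow_mul_exp_neg_mul_Ioi 0 hb).const_mul c)
  refine hdom.mono' ((continuous_exp.comp (by fun_prop)).aestronglyMeasurable.mul hg) ?_
  filter_upwards [ae_restrict_mem measurableSet_Ioi] with s hs
  have hgs : 0 ≤ g s := (le_of_lt hs).trans (hg_lower s hs)
  rw [norm_of_nonneg (by positivity)]
  nlinarith [hg_upper s hs, exp_pos (-(b * s))]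

lemma one_le_sq_mul_integral_exp_neg_mul_mul (hb : 0 < b)
    (hint : IntegrableOn (fun s => exp (-(b * s)) * g s) (Ioi 0))
    (hg_lower : ∀ s ∈ Ioi (0 : ℝ), s ≤ g s) :
    1 ≤ b ^ 2 * ∫ s in Ioi (0 : ℝ), exp (-(b * s)) * g s := by
  have hmono : ∫ s in Ioi (0 : ℝ), s ^ 1 * exp (-(b * s)) ≤
      ∫ s in Ioi (0 : ℝ), exp (-(b * s)) * g s :=
    setIntegral_mono_on (integrableOn_pow_mul_exp_neg_mul_Ioi 1 hb) hint measurableSet_Ioi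
      fun s hs => by rw [pow_one, mul_comm]; gcongr; exact hg_lower s hs
  rw [integral_pow_mul_exp_neg_mul_Ioi 1 hb] at hmono
  calc (1 : ℝ) = b ^ 2 * (1 ! / b ^ (1 + 1)) := by field_simp; norm_num
    _ ≤ _ := by gcongr

lemma sq_mul_integral_exp_neg_mul_mul_le (hb : 0 < b)
    (hint : IntegrableOn (fun s => exp (-(b * s)) * g s) (Ioi 0))
    (hg_upper : ∀ s ∈ Ioi (0 : ℝ), g s ≤ s + c) :
    b ^ 2 * ∫ s in Ioi (0 : ℝ), exp (-(b * s)) * g s ≤ 1 + c * b := by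
  have hint1 := integrableOn_pow_mul_exp_neg_mul_Ioi 1 hb
  have hint0 := (integrableOn_pow_mul_exp_neg_mul_Ioi 0 hb).const_mul c
  have hmono : ∫ s in Ioi (0 : ℝ), exp (-(b * s)) * g s ≤
      ∫ s in Ioi (0 : ℝ), s ^ 1 * exp (-(b * s)) + c * (s ^ 0 * exp (-(b * s))) :=
    setIntegral_mono_on hint (hint1.add hint0) measurableSet_Ioi
      fun s hs => by nlinarith [hg_upper s hs, exp_pos (-(b * s))]
  rw [integral_add hint1 hint0, integral_const_mul, integral_pow_mul_exp_neg_mul_Ioi 1 hb,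
    integral_pow_mul_exp_neg_mul_Ioi 0 hb] at hmono
  calc b ^ 2 * ∫ s in Ioi (0 : ℝ), exp (-(b * s)) * g s
      ≤ b ^ 2 * (1 ! / b ^ (1 + 1) + c * (0 ! / b ^ (0 + 1))) := by gcongr
    _ = 1 + c * b := by field_simp; norm_num; ring

theorem tendsto_mul_integral_exp_neg_sqrt_mul_mul (c : ℝ)
    (hg : AEStronglyMeasurable g (volume.restrict (Ioi 0)))
    (hg_lower : ∀ s ∈ Ioi (0 : ℝ), s ≤ g s) (hg_upper : ∀ s ∈ Ioi (0 : ℝ), g s ≤ s + c) :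
    Tendsto (fun a => a * ∫ s in Ioi (0 : ℝ), exp (-(√a * s)) * g s) (𝓝[>] 0) (𝓝 1) := by
  have hupper : Tendsto (fun a : ℝ => 1 + c * √a) (𝓝[>] 0) (𝓝 1) := by
    have h := ((continuous_sqrt.tendsto 0).const_mul c).const_add 1
    rw [sqrt_zero, mul_zero, add_zero] at h
    exact h.mono_left nhdsWithin_le_nhds
  have hbounds : ∀ a ∈ Ioi (0 : ℝ), 1 ≤ a * ∫ s in Ioi (0 : ℝ), exp (-(√a * s)) * g s ∧
      a * ∫ s in Ioi (0 : ℝ), exp (-(√a * s)) * g s ≤ 1 + c * √a := by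
    intro a ha
    have hb := sqrt_pos.2 ha
    have hint := integrableOn_exp_neg_mul_mul_of_le hb hg hg_lower hg_upper
    have h_lower := one_le_sq_mul_integral_exp_neg_mul_mul hb hint hg_lower
    have h_upper := sq_mul_integral_exp_neg_mul_mul_le hb hint hg_upper
    rw [sq_sqrt (le_of_lt ha)] at h_lower h_upper
    exact ⟨h_lower, h_upper⟩
  exact tendsto_of_tendsto_of_tendsto_of_le_of_le' tendsto_const_nhds hupper
    (eventually_nhdsWithin_of_forall fun a ha => (hbounds a ha).1)
    (eventually_nhdsWithin_of_forall fun a ha => (hbounds a ha).2)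

end Sandwich

lemma le_sqrt_sq_add_four_mul {s : ℝ} (hs : 0 ≤ s) : s ≤ √(s ^ 2 + 4 * s) :=
  le_sqrt_of_sq_le (by linarith)

lemma sqrt_sq_add_four_mul_le {s : ℝ} (hs : 0 ≤ s) : √(s ^ 2 + 4 * s) ≤ s + 2 :=
  sqrt_le_iff.2 ⟨by linarith, by nlinarith⟩

theorem laplace_integral_tendsto_one :
    Tendsto (fun a : ℝ =>
        a * ∫ s in Set.Ioi (0:ℝ), Real.exp (-(Real.sqrt a * s)) * Real.sqrt (s^2 + 4*s))
      (nhdsWithin 0 (Set.Ioi 0)) (nhds 1) :=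
  tendsto_mul_integral_exp_neg_sqrt_mul_mul 2
    (by fun_prop : Continuous fun s : ℝ => √(s ^ 2 + 4 * s)).aestronglyMeasurable
    (fun _ hs => le_sqrt_sq_add_four_mul (le_of_lt hs))
    (fun _ hs => sqrt_sq_add_four_mul_le (le_of_lt hs))
end

section
/- Let X, Y be i.i.d. Exponential(1) random variables, σ = 2 min(X,Y)/(X+Y), A = XY. For every 0 < ε < 1/2 there is a constant C(ε) such that P(σ > ε and A < a) ≤ C(ε)·a for all sufficiently small a > 0. -/
open MeasureTheory ProbabilityTheory Real Filter

lemma expMeasure_Iic_le (t : ℝ) (ht : 0 ≤ t) :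
    expMeasure 1 (Set.Iic t) ≤ ENNReal.ofReal t := by
  have : expMeasure 1 (Set.Iic t) = ∫⁻ y in Set.Iic t, exponentialPDF 1 y := by
    rw [expMeasure, gammaMeasure, withDensity_apply _ measurableSet_Iic]
    rfl
  rw [this, lintegral_exponentialPDF_eq_antiDeriv one_pos t, if_pos ht]
  apply ENNReal.ofReal_le_ofReal
  have := Real.add_one_le_exp (-(1 * t))
  nlinarith [Real.exp_pos (-(1*t))]

lemma expMeasure_Iio_zero : expMeasure 1 (Set.Iio 0) = 0 := by
  rw [expMeasure, gammaMeasure, withDensity_apply _ measurableSet_Iio]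
  exact lintegral_exponentialPDF_of_nonpos le_rfl

theorem joint_event_bigO_a
    {Ω : Type*} [MeasurableSpace Ω] (μ : Measure Ω) [IsProbabilityMeasure μ]
    (X Y : Ω → ℝ) (hX : Measurable X) (hY : Measurable Y)
    (hXd : μ.map X = expMeasure 1) (hYd : μ.map Y = expMeasure 1)
    (hind : IndepFun X Y μ) (ε : ℝ) (hε0 : 0 < ε) (hε : ε < 1/2) :
    ∃ C : ℝ, ∀ᶠ a in nhdsWithin (0:ℝ) (Set.Ioi 0),
      μ {ω | 2 * min (X ω) (Y ω) / (X ω + Y ω) > ε ∧ X ω * Y ω < a} ≤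
        ENNReal.ofReal (C * a) := by
  refine ⟨2 / ε, ?_⟩
  filter_upwards [self_mem_nhdsWithin] with a (ha : 0 < a)
  set t : ℝ := Real.sqrt (2 * a / ε) with ht_def
  have ht0 : 0 ≤ t := Real.sqrt_nonneg _
  have ht2 : t ^ 2 = 2 * a / ε := Real.sq_sqrt (by positivity)
  -- measure of negative parts is zero
  have hXneg : μ (X ⁻¹' Set.Iio 0) = 0 := by
    rw [← Measure.map_apply hX measurableSet_Iio, hXd, expMeasure_Iio_zero]
  have hYneg : μ (Y ⁻¹' Set.Iio 0) = 0 := by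
    rw [← Measure.map_apply hY measurableSet_Iio, hYd, expMeasure_Iio_zero]
  -- inclusion
  have hsub : {ω | 2 * min (X ω) (Y ω) / (X ω + Y ω) > ε ∧ X ω * Y ω < a} ⊆
      (X ⁻¹' Set.Iic t ∩ Y ⁻¹' Set.Iic t) ∪ (X ⁻¹' Set.Iio 0 ∪ Y ⁻¹' Set.Iio 0) := by
    rintro ω ⟨h1, h2⟩
    set x := X ω; set y := Y ω
    rcases lt_trichotomy (x + y) 0 with hs | hs | hs
    · -- x + y < 0 : min < 0, so x < 0 or y < 0
      right
      by_contra hcon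
      simp only [Set.mem_union, Set.mem_preimage, Set.mem_Iio, not_or, not_lt] at hcon
      linarith [hcon.1, hcon.2]
    · exfalso
      rw [hs, div_zero] at h1
      exact absurd h1 (not_lt.mpr hε0.le)
    · -- x + y > 0
      left
      have hmin : ε * (x + y) < 2 * min x y := by
        rw [gt_iff_lt, lt_div_iff₀ hs] at h1; linarith
      have hminpos : 0 < min x y := by nlinarith
      have hx0 : 0 < x := lt_of_lt_of_le hminpos (min_le_left _ _)
      have hy0 : 0 < y := lt_of_lt_of_le hminpos (min_le_right _ _)
      have hmax : max x y ≤ x + y := by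
        rcases max_cases x y with ⟨h, _⟩ | ⟨h, _⟩ <;> rw [h] <;> linarith
      have hminmax : ε * max x y ≤ 2 * min x y := by nlinarith
      have hmm : min x y * max x y = x * y := min_mul_max x y
      have hmaxsq : ε * (max x y) ^ 2 ≤ 2 * (x * y) := by nlinarith [le_max_left x y]
      have hmaxsq' : (max x y) ^ 2 < t ^ 2 := by
        rw [ht2]
        rw [lt_div_iff₀ hε0]
        nlinarith
      have hmaxlt : max x y < t :=
        lt_of_pow_lt_pow_left₀ 2 ht0 hmaxsq'
      constructor
      · exact le_of_lt (lt_of_le_of_lt (le_max_left x y) hmaxlt)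
      · exact le_of_lt (lt_of_le_of_lt (le_max_right x y) hmaxlt)
  calc μ {ω | 2 * min (X ω) (Y ω) / (X ω + Y ω) > ε ∧ X ω * Y ω < a}
      ≤ μ ((X ⁻¹' Set.Iic t ∩ Y ⁻¹' Set.Iic t) ∪ (X ⁻¹' Set.Iio 0 ∪ Y ⁻¹' Set.Iio 0)) :=
        measure_mono hsub
    _ ≤ μ (X ⁻¹' Set.Iic t ∩ Y ⁻¹' Set.Iic t) + μ (X ⁻¹' Set.Iio 0 ∪ Y ⁻¹' Set.Iio 0) :=
        measure_union_le _ _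
    _ = μ (X ⁻¹' Set.Iic t ∩ Y ⁻¹' Set.Iic t) := by
        rw [measure_union_null hXneg hYneg, add_zero]
    _ = μ (X ⁻¹' Set.Iic t) * μ (Y ⁻¹' Set.Iic t) :=
        hind.measure_inter_preimage_eq_mul _ _ measurableSet_Iic measurableSet_Iic
    _ ≤ ENNReal.ofReal t * ENNReal.ofReal t := by
        apply mul_le_mul'
        · rw [← Measure.map_apply hX measurableSet_Iic, hXd]
          exact expMeasure_Iic_le t ht0
        · rw [← Measure.map_apply hY measurableSet_Iic, hYd]
          exact expMeasure_Iic_le t ht0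
    _ = ENNReal.ofReal (2 / ε * a) := by
        rw [← ENNReal.ofReal_mul ht0, ← sq, ht2]
        ring_nf
end

section
/- Let X, Y be i.i.d. Exponential(1) and τ = max(X,Y), A = XY. For every ε > 0, lim_{a→0⁺} P(τ > ε | A < a) = 0. -/
open MeasureTheory ProbabilityTheory Real Filter

/-! On `{XY < a, max(X, Y) > ε}` one of `X`, `Y` is below `a / ε`, so
`P(XY < a, max(X, Y) > ε) ≤ 2a / ε`. On the other hand, if `2ⁿa ≤ 1`, the rectangles
`[2ᵏa, 2ᵏ⁺¹a) × [0, 2⁻ᵏ⁻¹)`, `k < n`, are disjoint, lie in `{xy < a}`, and each has probability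
at least `e⁻²a / 2` because the exponential density is at least `e⁻¹` on `[0, 1]`. Hence
`P(XY < a) ≥ n e⁻²a / 2` (of order `a log (1 / a)`), and the conditional probability is at most
`4e² / (nε)`. -/

open Set Function
open scoped ENNReal

namespace ProbabilityTheory

lemma expMeasure_Iio_le {r : ℝ} (hr : 0 < r) (c : ℝ) :
    expMeasure r (Iio c) ≤ ENNReal.ofReal (r * c) := by
  have := isProbabilityMeasure_expMeasure hr
  calc expMeasure r (Iio c) ≤ expMeasure r (Iic c) := measure_mono Iio_subset_Iic_self
    _ = ENNReal.ofReal (cdf (expMeasure r) c) := (ofReal_cdf _ c).symm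
    _ ≤ ENNReal.ofReal (r * c) := by
      rw [cdf_expMeasure_eq hr]
      split_ifs
      · exact ENNReal.ofReal_le_ofReal (by linarith [add_one_le_exp (-(r * c))])
      · simp

lemma smul_volume_restrict_Icc_le_expMeasure {r : ℝ} (hr : 0 ≤ r) (T : ℝ) :
    ENNReal.ofReal (r * exp (-(r * T))) • volume.restrict (Icc 0 T) ≤ expMeasure r := by
  refine Measure.le_iff.2 fun s hs ↦ ?_
  rw [Measure.smul_apply, Measure.restrict_apply hs, smul_eq_mul, ← setLIntegral_const,
    expMeasure, gammaMeasure, withDensity_apply _ hs]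
  calc ∫⁻ _ in s ∩ Icc 0 T, ENNReal.ofReal (r * exp (-(r * T)))
      ≤ ∫⁻ x in s ∩ Icc 0 T, exponentialPDF r x := by
        refine setLIntegral_mono' (hs.inter measurableSet_Icc) fun x ⟨_, hx0, hxT⟩ ↦ ?_
        rw [exponentialPDF_of_nonneg hx0]
        gcongr
    _ ≤ ∫⁻ x in s, gammaPDF 1 r x := lintegral_mono_set inter_subset_left

end ProbabilityTheory

lemma ofReal_mul_sub_le_of_smul_volume_le {ν : Measure ℝ} {c : ℝ} (hc : 0 ≤ c)
    (hν : ENNReal.ofReal c • volume.restrict (Icc 0 1) ≤ ν) {s t : ℝ} (hs : 0 ≤ s) (ht : t ≤ 1) :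
    ENNReal.ofReal (c * (t - s)) ≤ ν (Ico s t) := by
  calc ENNReal.ofReal (c * (t - s))
      = ENNReal.ofReal c * volume.restrict (Icc 0 1) (Ico s t) := by
        rw [Measure.restrict_eq_self _ (Ico_subset_Icc_self.trans (Icc_subset_Icc hs ht)),
          Real.volume_Ico, ENNReal.ofReal_mul hc]
    _ ≤ ν (Ico s t) := Measure.le_iff'.1 hν _

lemma lt_div_or_lt_div_of_mul_lt_of_lt_max {x y a ε : ℝ} (hε : 0 < ε) (ha : 0 ≤ a)
    (hxy : x * y < a) (hmax : ε < max x y) : x < a / ε ∨ y < a / ε := by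
  by_contra! h
  have hx : 0 ≤ x := (div_nonneg ha hε.le).trans h.1
  rcases lt_max_iff.1 hmax with hεx | hεy
  · have : ε * (a / ε) ≤ x * y := mul_le_mul hεx.le h.2 (div_nonneg ha hε.le) hx
    rw [mul_div_cancel₀ _ hε.ne'] at this
    linarith
  · have : a / ε * ε ≤ x * y := mul_le_mul h.1 hεy.le hε.le hx
    rw [div_mul_cancel₀ _ hε.ne'] at this
    linarith

lemma toReal_cond_apply_le_div {Ω : Type*} [MeasurableSpace Ω] {μ : Measure Ω}
    [IsFiniteMeasure μ] {s t : Set Ω} (hs : MeasurableSet s) {p q : ℝ} (hp : 0 ≤ p) (hq : 0 < q)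
    (hnum : μ (s ∩ t) ≤ ENNReal.ofReal p) (hden : ENNReal.ofReal q ≤ μ s) :
    (μ[|s] t).toReal ≤ p / q := by
  rw [cond_apply hs, ENNReal.toReal_mul, ENNReal.toReal_inv, inv_mul_eq_div]
  exact div_le_div₀ hp (ENNReal.toReal_le_of_le_ofReal hp hnum) hq
    ((ENNReal.ofReal_le_iff_le_toReal (measure_ne_top μ s)).1 hden)

section

variable {Ω : Type*} [MeasurableSpace Ω] {μ : Measure Ω} {X Y : Ω → ℝ}

lemma measure_mul_lt_inter_lt_max_le (hX : Measurable X) (hY : Measurable Y) {a ε : ℝ}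
    (hε : 0 < ε) (ha : 0 ≤ a) :
    μ ({ω | X ω * Y ω < a} ∩ {ω | max (X ω) (Y ω) > ε}) ≤
      μ.map X (Iio (a / ε)) + μ.map Y (Iio (a / ε)) := by
  rw [Measure.map_apply hX measurableSet_Iio, Measure.map_apply hY measurableSet_Iio]
  refine (measure_mono ?_).trans (measure_union_le _ _)
  exact fun ω ⟨hxy, hmax⟩ ↦ lt_div_or_lt_div_of_mul_lt_of_lt_max hε ha hxy hmax

lemma ofReal_le_measure_mul_lt (hX : Measurable X) (hY : Measurable Y) (hind : IndepFun X Y μ)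
    {c : ℝ} (hc : 0 ≤ c) (hXc : ENNReal.ofReal c • volume.restrict (Icc 0 1) ≤ μ.map X)
    (hYc : ENNReal.ofReal c • volume.restrict (Icc 0 1) ≤ μ.map Y) {a : ℝ} (ha : 0 < a) {n : ℕ}
    (hn : 2 ^ n * a ≤ 1) :
    ENNReal.ofReal (n * (c ^ 2 * a / 2)) ≤ μ {ω | X ω * Y ω < a} := by
  set E : ℕ → Set Ω := fun k ↦
    X ⁻¹' Ico (2 ^ k * a) (2 ^ (k + 1) * a) ∩ Y ⁻¹' Ico 0 (2 ^ (k + 1))⁻¹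
  have hE_sub : ∀ k, E k ⊆ {ω | X ω * Y ω < a} := by
    rintro k ω ⟨⟨hx₀, hx₁⟩, -, hy⟩
    have h2 : (0 : ℝ) < 2 ^ (k + 1) := by positivity
    calc X ω * Y ω ≤ X ω * (2 ^ (k + 1))⁻¹ :=
          mul_le_mul_of_nonneg_left hy.le ((by positivity : (0 : ℝ) ≤ 2 ^ k * a).trans hx₀)
      _ < 2 ^ (k + 1) * a * (2 ^ (k + 1))⁻¹ := mul_lt_mul_of_pos_right hx₁ (inv_pos.2 h2)
      _ = a := by field_simp
  have hmono : Monotone fun k : ℕ ↦ (2 : ℝ) ^ k * a := fun _ _ hij ↦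
    mul_le_mul_of_nonneg_right (pow_le_pow_right₀ one_le_two hij) ha.le
  have hE_disj : Pairwise (Disjoint on E) := fun _ _ hij ↦
    ((hmono.pairwise_disjoint_on_Ico_succ hij).preimage X).mono inter_subset_left inter_subset_left
  have hE_mass : ∀ k < n, ENNReal.ofReal (c ^ 2 * a / 2) ≤ μ (E k) := by
    intro k hk
    have hk1 : (2 : ℝ) ^ (k + 1) * a ≤ 1 := (hmono hk).trans hn
    rw [hind.measure_inter_preimage_eq_mul _ _ measurableSet_Ico measurableSet_Ico,
      ← Measure.map_apply hX measurableSet_Ico, ← Measure.map_apply hY measurableSet_Ico]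
    calc ENNReal.ofReal (c ^ 2 * a / 2)
        = ENNReal.ofReal (c * (2 ^ (k + 1) * a - 2 ^ k * a)) *
            ENNReal.ofReal (c * ((2 ^ (k + 1))⁻¹ - 0)) := by
          have hle : (2 : ℝ) ^ k * a ≤ 2 ^ (k + 1) * a := hmono k.le_succ
          rw [← ENNReal.ofReal_mul (mul_nonneg hc (sub_nonneg.2 hle))]
          congr 1
          field_simp
          ring
      _ ≤ _ := by
          gcongr
          · exact ofReal_mul_sub_le_of_smul_volume_le hc hXc (by positivity) hk1
          · exact ofReal_mul_sub_le_of_smul_volume_le hc hYc le_rfl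
              (inv_le_one_of_one_le₀ (one_le_pow₀ one_le_two))
  calc ENNReal.ofReal (n * (c ^ 2 * a / 2))
      = ∑ _k ∈ Finset.range n, ENNReal.ofReal (c ^ 2 * a / 2) := by
        rw [Finset.sum_const, Finset.card_range, nsmul_eq_mul,
          ENNReal.ofReal_mul n.cast_nonneg, ENNReal.ofReal_natCast]
    _ ≤ ∑ k ∈ Finset.range n, μ (E k) :=
        Finset.sum_le_sum fun k hk ↦ hE_mass k (Finset.mem_range.1 hk)
    _ = μ (⋃ k ∈ Finset.range n, E k) :=
        (measure_biUnion_finset (hE_disj.set_pairwise _) fun k _ ↦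
          (hX measurableSet_Ico).inter (hY measurableSet_Ico)).symm
    _ ≤ μ {ω | X ω * Y ω < a} := measure_mono (iUnion₂_subset fun k _ ↦ hE_sub k)

lemma toReal_cond_lt_max_le_of_two_pow_mul_le [IsProbabilityMeasure μ] (hX : Measurable X)
    (hY : Measurable Y) (hXd : μ.map X = expMeasure 1) (hYd : μ.map Y = expMeasure 1)
    (hind : IndepFun X Y μ) {ε : ℝ} (hε : 0 < ε) {a : ℝ} (ha : 0 < a) {n : ℕ} (hn : 0 < n)
    (han : 2 ^ n * a ≤ 1) :
    ((μ[|{ω | X ω * Y ω < a}]) {ω | max (X ω) (Y ω) > ε}).toReal ≤ 4 * exp 2 / (n * ε) := by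
  have hc : ENNReal.ofReal (exp (-1)) • volume.restrict (Icc 0 1) ≤ expMeasure 1 := by
    simpa using smul_volume_restrict_Icc_le_expMeasure zero_le_one 1
  have hnum := (measure_mul_lt_inter_lt_max_le hX hY hε ha.le).trans
    (add_le_add (hXd ▸ expMeasure_Iio_le one_pos _) (hYd ▸ expMeasure_Iio_le one_pos _))
  rw [← ENNReal.ofReal_add (by positivity) (by positivity)] at hnum
  have hden := ofReal_le_measure_mul_lt hX hY hind (exp_pos _).le (hXd ▸ hc) (hYd ▸ hc) ha han
  refine (toReal_cond_apply_le_div (measurableSet_lt (hX.mul hY) measurable_const)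
    (by positivity) (by positivity) hnum hden).trans_eq ?_
  have he : exp (-1) ^ 2 * exp 2 = 1 := by rw [← exp_nat_mul, ← exp_add]; norm_num
  field_simp
  linear_combination -4 * he

end

theorem cond_max_given_small_area
    {Ω : Type*} [MeasurableSpace Ω] (μ : Measure Ω) [IsProbabilityMeasure μ]
    (X Y : Ω → ℝ) (hX : Measurable X) (hY : Measurable Y)
    (hXd : μ.map X = expMeasure 1) (hYd : μ.map Y = expMeasure 1)
    (hind : IndepFun X Y μ) (ε : ℝ) (hε : 0 < ε) :
    Tendsto (fun a : ℝ =>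
        ((μ[|{ω | X ω * Y ω < a}]) {ω | max (X ω) (Y ω) > ε}).toReal)
      (nhdsWithin 0 (Set.Ioi 0)) (nhds 0) := by
  refine tendsto_order.2 ⟨fun b hb ↦ .of_forall fun a ↦ hb.trans_le ENNReal.toReal_nonneg,
    fun b hb ↦ ?_⟩
  obtain ⟨n, hn⟩ := exists_nat_gt (4 * exp 2 / (b * ε))
  have hn₀ : 0 < n := by exact_mod_cast (by positivity : (0 : ℝ) ≤ _).trans_lt hn
  filter_upwards [Ioo_mem_nhdsGT (by positivity : (0 : ℝ) < (2 ^ n)⁻¹)] with a ⟨ha, han⟩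
  have han' : 2 ^ n * a ≤ 1 := ((lt_inv_mul_iff₀ (by positivity)).1 (by rwa [mul_one])).le
  refine (toReal_cond_lt_max_le_of_two_pow_mul_le hX hY hXd hYd hind hε ha hn₀ han').trans_lt ?_
  rw [div_lt_iff₀ (by positivity)]
  rw [div_lt_iff₀ (by positivity)] at hn
  linarith
end

section
/- For a > 0, the function a ↦ ∫_0^∞ ∫_0^{a/x} e^{-x-y} dy dx is differentiable with derivative (1/2)∫_2^∞ e^{-√a s}(√a·s - 2)√(s²-4) ds, and this derivative tends to +∞ as a → 0⁺ (asymptotically like e^{-2√a}/a up to lower order terms). -/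
/-!
Integrating out `y` gives `F a = ∫₀^∞ (e^{-x} - e^{-x - a/x}) dx`, hence
`F' a = ∫₀^∞ x⁻¹ e^{-x - a/x} dx` by differentiation under the integral sign. With `a = b²`,
the substitution `s = x / b + b / x`, whose two inverse branches cover `(b, ∞)` and `(0, b)`,
turns this into `2 ∫₂^∞ e^{-bs} / √(s² - 4) ds`; integrating by parts against
`-e^{-bs} s √(s² - 4) / 2` identifies it with the stated formula. Restricting to `s ∈ (3, 1/b)`,
where `e^{-bs} ≥ e^{-1}` and `√(s² - 4) ≤ s`, bounds it below by `e^{-1} log (1 / (3b)) → ∞`.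
-/

open MeasureTheory Real Filter Set Topology

lemma sqrt_sq_sub_four_le {s : ℝ} (hs : 2 ≤ s) : √(s ^ 2 - 4) ≤ s :=
  Real.sqrt_le_iff.2 ⟨by linarith, by linarith⟩

lemma hasDerivAt_sqrt_sq_sub_four {s : ℝ} (hs : 2 < s) :
    HasDerivAt (fun s => √(s ^ 2 - 4)) (s / √(s ^ 2 - 4)) s := by
  convert ((hasDerivAt_pow 2 s).sub_const 4).sqrt (by nlinarith) using 1
  ring

lemma integral_Ioo_exp_neg_sub {x c : ℝ} (hc : 0 ≤ c) :
    ∫ y in Ioo 0 c, exp (-x - y) = exp (-x) - exp (-x - c) := by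
  rw [← integral_Ioc_eq_integral_Ioo, ← intervalIntegral.integral_of_le hc,
    intervalIntegral.integral_eq_sub_of_hasDerivAt (f := fun y => -exp (-x - y))
      (fun y _ => ?_) ((by fun_prop : Continuous fun y => exp (-x - y)).intervalIntegrable _ _)]
  · simp only [sub_zero]; ring
  · simpa using ((hasDerivAt_id y).const_sub (-x)).exp.fun_neg

lemma inv_mul_exp_neg_sub_div_le {c x : ℝ} (hc : 0 < c) (hx : 0 < x) :
    x⁻¹ * exp (-x - c / x) ≤ c⁻¹ * exp (-x) := by
  have hdiv : c / x ≤ exp (c / x) := by linarith [add_one_le_exp (c / x)]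
  have : x⁻¹ * exp (-(c / x)) ≤ c⁻¹ := by
    rw [exp_neg, ← mul_inv, inv_le_inv₀ (by positivity) hc]
    exact (div_le_iff₀' hx).1 hdiv
  calc x⁻¹ * exp (-x - c / x) = x⁻¹ * exp (-(c / x)) * exp (-x) := by
        rw [mul_assoc, ← exp_add]; ring_nf
    _ ≤ c⁻¹ * exp (-x) := by gcongr

lemma integrableOn_inv_mul_exp_neg_sub_div {c : ℝ} (hc : 0 < c) :
    IntegrableOn (fun x => x⁻¹ * exp (-x - c / x)) (Ioi 0) := by
  refine Integrable.mono' ((exp_neg_integrableOn_Ioi 0 one_pos).const_mul c⁻¹)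
    (by fun_prop : Measurable fun x : ℝ => x⁻¹ * exp (-x - c / x)).aestronglyMeasurable
    (ae_restrict_of_forall_mem measurableSet_Ioi fun x (hx : 0 < x) => ?_)
  rw [Real.norm_of_nonneg (by positivity)]
  simpa using inv_mul_exp_neg_sub_div_le hc hx

lemma hasDerivAt_integral_exp_neg_sub_exp_neg_sub_div {a : ℝ} (ha : 0 < a) :
    HasDerivAt (fun a => ∫ x in Ioi 0, (exp (-x) - exp (-x - a / x)))
      (∫ x in Ioi 0, x⁻¹ * exp (-x - a / x)) a := by
  have hexp : IntegrableOn (fun x : ℝ => exp (-x)) (Ioi 0) := by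
    simpa using exp_neg_integrableOn_Ioi 0 one_pos
  have hmeas (a : ℝ) : AEStronglyMeasurable (fun x : ℝ => exp (-x) - exp (-x - a / x))
      (volume.restrict (Ioi 0)) :=
    (by fun_prop : Measurable fun x : ℝ => exp (-x) - exp (-x - a / x)).aestronglyMeasurable
  have hexp_sub : IntegrableOn (fun x : ℝ => exp (-x - a / x)) (Ioi 0) :=
    Integrable.mono' hexp
      (by fun_prop : Measurable fun x : ℝ => exp (-x - a / x)).aestronglyMeasurable
      (ae_restrict_of_forall_mem measurableSet_Ioi fun x (hx : 0 < x) => by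
        rw [Real.norm_of_nonneg (exp_pos _).le]
        exact exp_le_exp.2 (by linarith [div_pos ha hx]))
  refine (hasDerivAt_integral_of_dominated_loc_of_deriv_le
    (F' := fun a x => x⁻¹ * exp (-x - a / x)) (Ioi_mem_nhds (half_lt_self ha))
    (Eventually.of_forall hmeas) (hexp.sub hexp_sub)
    (bound := fun x => (a / 2)⁻¹ * exp (-x)) ?_ ?_ (hexp.const_mul _) ?_).2
  · exact (by fun_prop : Measurable fun x : ℝ => x⁻¹ * exp (-x - a / x)).aestronglyMeasurable
  · refine ae_restrict_of_forall_mem measurableSet_Ioi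
      fun x (hx : 0 < x) a' (ha' : a / 2 < a') => ?_
    rw [Real.norm_of_nonneg (by positivity)]
    calc x⁻¹ * exp (-x - a' / x) ≤ x⁻¹ * exp (-x - a / 2 / x) := by
          gcongr
      _ ≤ (a / 2)⁻¹ * exp (-x) := inv_mul_exp_neg_sub_div_le (half_pos ha) hx
  · refine ae_restrict_of_forall_mem measurableSet_Ioi fun x (hx : 0 < x) a' _ => ?_
    refine ((((hasDerivAt_id a').div_const x).const_sub (-x)).exp.const_sub _).congr_deriv ?_
    simp only [id]
    ring

/-- For `ε = ±1`, the two inverse branches of `x ↦ x / b + b / x`, on `(2, ∞)`. -/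
noncomputable def joukowskyInv (b ε s : ℝ) : ℝ := b / 2 * (s + ε * √(s ^ 2 - 4))

section joukowskyInv

variable {b ε s x : ℝ}

lemma joukowskyInv_pos (hb : 0 < b) (hε : ε ^ 2 = 1) (hs : 2 < s) : 0 < joukowskyInv b ε s := by
  have hsq : √(s ^ 2 - 4) ^ 2 = s ^ 2 - 4 := Real.sq_sqrt (by nlinarith)
  have : 0 < s + ε * √(s ^ 2 - 4) := by
    -- `(s + ε √(s² - 4)) (s - ε √(s² - 4)) = 4`, a product of two factors summing to `2s > 0`
    by_contra! h
    nlinarith [mul_nonneg (sub_nonneg.2 h) (by linarith : (0 : ℝ) ≤ s - ε * √(s ^ 2 - 4))]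
  unfold joukowskyInv
  positivity

lemma joukowskyInv_add_sq_div (hb : 0 < b) (hε : ε ^ 2 = 1) (hs : 2 < s) :
    joukowskyInv b ε s + b ^ 2 / joukowskyInv b ε s = b * s := by
  have hsq : √(s ^ 2 - 4) ^ 2 = s ^ 2 - 4 := Real.sq_sqrt (by nlinarith)
  have hpos := joukowskyInv_pos hb hε hs
  field_simp
  unfold joukowskyInv
  linear_combination b ^ 2 / 4 * (ε ^ 2 * hsq + (s ^ 2 - 4) * hε)

lemma hasDerivAt_joukowskyInv (hε : ε ^ 2 = 1) (hs : 2 < s) :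
    HasDerivAt (joukowskyInv b ε) (ε * joukowskyInv b ε s / √(s ^ 2 - 4)) s := by
  have hroot : 0 < √(s ^ 2 - 4) := Real.sqrt_pos.2 (by nlinarith)
  refine (((hasDerivAt_id s).add ((hasDerivAt_sqrt_sq_sub_four hs).const_mul ε)).const_mul
    (b / 2)).congr_deriv ?_
  unfold joukowskyInv
  field_simp
  linear_combination -b * √(s ^ 2 - 4) * hε

lemma injOn_joukowskyInv (hb : 0 < b) (hε : ε ^ 2 = 1) : InjOn (joukowskyInv b ε) (Ioi 2) := by
  intro s (hs : 2 < s) t (ht : 2 < t) hst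
  have := joukowskyInv_add_sq_div hb hε hs
  rw [hst, joukowskyInv_add_sq_div hb hε ht] at this
  exact mul_left_cancel₀ hb.ne' this.symm

lemma setIntegral_image_joukowskyInv (hb : 0 < b) (hε : ε ^ 2 = 1) :
    ∫ x in joukowskyInv b ε '' Ioi 2, x⁻¹ * exp (-x - b ^ 2 / x) =
      ∫ s in Ioi 2, exp (-(b * s)) / √(s ^ 2 - 4) := by
  rw [integral_image_eq_integral_abs_deriv_smul measurableSet_Ioi
    (fun s hs => (hasDerivAt_joukowskyInv hε hs).hasDerivWithinAt) (injOn_joukowskyInv hb hε)]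
  refine setIntegral_congr_fun measurableSet_Ioi fun s (hs : 2 < s) => ?_
  have hpos := joukowskyInv_pos hb hε hs
  have hroot : 0 < √(s ^ 2 - 4) := Real.sqrt_pos.2 (by nlinarith)
  have hε' : |ε| = 1 :=
    (pow_eq_one_iff_of_nonneg (abs_nonneg ε) two_ne_zero).1 (by rw [sq_abs, hε])
  rw [smul_eq_mul, abs_div, abs_mul, hε', abs_of_pos hpos, abs_of_pos hroot, ← neg_add',
    joukowskyInv_add_sq_div hb hε hs]
  field_simp

lemma two_lt_div_add_div (hb : 0 < b) (hx : 0 < x) (hxb : x ≠ b) : 2 < x / b + b / x := by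
  have : 0 < (x - b) ^ 2 := by positivity
  rw [div_add_div _ _ hb.ne' hx.ne', lt_div_iff₀ (by positivity)]
  nlinarith

lemma sqrt_div_add_div_sq_sub_four (hb : 0 < b) (hx : 0 < x) :
    √((x / b + b / x) ^ 2 - 4) = |x / b - b / x| := by
  rw [← Real.sqrt_sq_eq_abs]
  congr 1
  field_simp
  ring

lemma image_joukowskyInv_one (hb : 0 < b) : joukowskyInv b 1 '' Ioi 2 = Ioi b := by
  ext x
  constructor
  · rintro ⟨s, hs : 2 < s, rfl⟩
    have := sqrt_nonneg (s ^ 2 - 4)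
    show b < b / 2 * (s + 1 * √(s ^ 2 - 4))
    nlinarith
  · intro (hx : b < x)
    have hx0 : 0 < x := hb.trans hx
    refine ⟨x / b + b / x, two_lt_div_add_div hb hx0 hx.ne', ?_⟩
    have : b / x < x / b := by
      rw [div_lt_div_iff₀ hx0 hb]; nlinarith
    rw [joukowskyInv, sqrt_div_add_div_sq_sub_four hb hx0, abs_of_pos (by linarith)]
    field_simp
    ring

lemma image_joukowskyInv_neg_one (hb : 0 < b) : joukowskyInv b (-1) '' Ioi 2 = Ioo 0 b := by
  ext x
  constructor
  · rintro ⟨s, hs : 2 < s, rfl⟩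
    refine ⟨joukowskyInv_pos hb (by norm_num) hs, ?_⟩
    have := sqrt_nonneg (s ^ 2 - 4)
    have hsq : √(s ^ 2 - 4) ^ 2 = s ^ 2 - 4 := Real.sq_sqrt (by nlinarith)
    have : s - 2 < √(s ^ 2 - 4) := by nlinarith
    show b / 2 * (s + -1 * √(s ^ 2 - 4)) < b
    nlinarith
  · rintro ⟨hx0, hx⟩
    refine ⟨x / b + b / x, two_lt_div_add_div hb hx0 hx.ne, ?_⟩
    have : x / b < b / x := by
      rw [div_lt_div_iff₀ hb hx0]; nlinarith
    rw [joukowskyInv, sqrt_div_add_div_sq_sub_four hb hx0, abs_of_neg (by linarith)]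
    field_simp
    ring

end joukowskyInv

lemma integral_inv_mul_exp_neg_sub_sq_div {b : ℝ} (hb : 0 < b) :
    ∫ x in Ioi 0, x⁻¹ * exp (-x - b ^ 2 / x) = 2 * ∫ s in Ioi 2, exp (-(b * s)) / √(s ^ 2 - 4) := by
  have hint := integrableOn_inv_mul_exp_neg_sub_div (pow_pos hb 2)
  rw [← Ioc_union_Ioi_eq_Ioi hb.le, setIntegral_union (Ioc_disjoint_Ioi le_rfl) measurableSet_Ioi
    (hint.mono_set Ioc_subset_Ioi_self) (hint.mono_set (Ioi_subset_Ioi hb.le)),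
    integral_Ioc_eq_integral_Ioo, ← image_joukowskyInv_neg_one hb, ← image_joukowskyInv_one hb,
    setIntegral_image_joukowskyInv hb (by norm_num),
    setIntegral_image_joukowskyInv hb (by norm_num)]
  ring

lemma integrableOn_exp_neg_mul_div_sqrt {b : ℝ} (hb : 0 < b) :
    IntegrableOn (fun s => exp (-(b * s)) / √(s ^ 2 - 4)) (Ioi 2) := by
  have hGamma : IntegrableOn (fun u : ℝ => u ^ (-(1 / 2) : ℝ) * exp (-b * u ^ (1 : ℝ))) (Ioi 0) :=
    integrableOn_rpow_mul_exp_neg_mul_rpow (by norm_num) one_pos hb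
  have hshift : IntegrableOn (fun s : ℝ => (s - 2) ^ (-(1 / 2) : ℝ) * exp (-b * (s - 2) ^ (1 : ℝ)))
      (Ioi 2) := by
    rw [← (measurePreserving_sub_right volume (2 : ℝ)).integrableOn_comp_preimage
      (measurableEmbedding_subRight 2)] at hGamma
    simpa [Function.comp_def] using hGamma
  refine Integrable.mono' hshift
    (by fun_prop : Measurable fun s : ℝ => exp (-(b * s)) / √(s ^ 2 - 4)).aestronglyMeasurable
    (ae_restrict_of_forall_mem measurableSet_Ioi ?_)
  intro s (hs : 2 < s)
  have hroot : √(s - 2) ≤ √(s ^ 2 - 4) := Real.sqrt_le_sqrt (by nlinarith)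
  have hpos : 0 < √(s - 2) := Real.sqrt_pos.2 (by linarith)
  rw [Real.norm_of_nonneg (by positivity), Real.rpow_one, Real.rpow_neg (by linarith),
    ← Real.sqrt_eq_rpow, inv_mul_eq_div]
  exact div_le_div₀ (by positivity) (exp_le_exp.2 (by nlinarith)) hpos hroot

lemma integrableOn_exp_neg_mul_mul_sqrt {b : ℝ} (hb : 0 < b) :
    IntegrableOn (fun s => exp (-(b * s)) * (b * s - 2) * √(s ^ 2 - 4)) (Ioi 2) := by
  have hmoment (n : ℕ) : IntegrableOn (fun s : ℝ => s ^ n * exp (-(b * s))) (Ioi 2) := by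
    have := (integrableOn_rpow_mul_exp_neg_mul_rpow (s := n)
      (by linarith [n.cast_nonneg (α := ℝ)]) one_pos hb).mono_set (Ioi_subset_Ioi zero_le_two)
    simpa [Real.rpow_natCast] using this
  refine Integrable.mono' (((hmoment 2).const_mul b).add ((hmoment 1).const_mul 2)) (by fun_prop)
    (ae_restrict_of_forall_mem measurableSet_Ioi ?_)
  intro s (hs : 2 < s)
  have hroot := sqrt_sq_sub_four_le hs.le
  rw [Real.norm_eq_abs, abs_mul, abs_mul, abs_of_pos (exp_pos _), abs_of_nonneg (sqrt_nonneg _)]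
  have : |b * s - 2| ≤ b * s + 2 := abs_le.2 ⟨by nlinarith, by linarith⟩
  have he := exp_pos (-(b * s))
  calc exp (-(b * s)) * |b * s - 2| * √(s ^ 2 - 4) ≤ exp (-(b * s)) * (b * s + 2) * s := by gcongr
    _ = b * (s ^ 2 * exp (-(b * s))) + 2 * (s ^ 1 * exp (-(b * s))) := by ring

lemma tendsto_exp_neg_mul_mul_sqrt_atTop {b : ℝ} (hb : 0 < b) :
    Tendsto (fun s => exp (-(b * s)) * (s * √(s ^ 2 - 4))) atTop (𝓝 0) := by
  have hsq : Tendsto (fun s => (b * s) ^ 2 * exp (-(b * s)) / b ^ 2) atTop (𝓝 0) := by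
    simpa using ((tendsto_pow_mul_exp_neg_atTop_nhds_zero 2).comp
      (tendsto_id.const_mul_atTop hb)).div_const (b ^ 2)
  refine squeeze_zero' ?_ ?_ hsq <;> filter_upwards [eventually_ge_atTop 2] with s hs
  · positivity
  have hroot := sqrt_sq_sub_four_le hs
  calc exp (-(b * s)) * (s * √(s ^ 2 - 4)) ≤ exp (-(b * s)) * (s * s) := by gcongr
    _ = (b * s) ^ 2 * exp (-(b * s)) / b ^ 2 := by field_simp

lemma integral_exp_neg_mul_mul_sqrt {b : ℝ} (hb : 0 < b) :
    ∫ s in Ioi 2, exp (-(b * s)) * (b * s - 2) * √(s ^ 2 - 4) =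
      4 * ∫ s in Ioi 2, exp (-(b * s)) / √(s ^ 2 - 4) := by
  have hderiv : ∀ s ∈ Ioi (2 : ℝ),
      HasDerivAt (fun s => -(exp (-(b * s)) * (s * √(s ^ 2 - 4))) / 2)
        (exp (-(b * s)) * (b * s - 2) * √(s ^ 2 - 4) / 2 -
          2 * (exp (-(b * s)) / √(s ^ 2 - 4))) s := by
    intro s (hs : 2 < s)
    have hroot : 0 < √(s ^ 2 - 4) := Real.sqrt_pos.2 (by nlinarith)
    have hsq : √(s ^ 2 - 4) ^ 2 = s ^ 2 - 4 := Real.sq_sqrt (by nlinarith)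
    refine (((((hasDerivAt_id s).const_mul b).neg.exp).mul
      ((hasDerivAt_id s).mul (hasDerivAt_sqrt_sq_sub_four hs))).neg.div_const 2).congr_deriv ?_
    simp only [Pi.neg_apply, Pi.mul_apply, id]
    field_simp
    linear_combination hsq
  have hFTC := integral_Ioi_of_hasDerivAt_of_tendsto (by fun_prop) hderiv
    (((integrableOn_exp_neg_mul_mul_sqrt hb).div_const 2).sub
      ((integrableOn_exp_neg_mul_div_sqrt hb).const_mul 2))
    (by simpa using (tendsto_exp_neg_mul_mul_sqrt_atTop hb).neg.div_const 2)
  rw [integral_sub ((integrableOn_exp_neg_mul_mul_sqrt hb).div_const 2)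
    ((integrableOn_exp_neg_mul_div_sqrt hb).const_mul 2), integral_div, integral_const_mul] at hFTC
  norm_num at hFTC
  linarith

lemma exp_neg_one_mul_log_le_integral_exp_neg_mul_div_sqrt {b : ℝ} (hb : 0 < b) (hb3 : 3 ≤ b⁻¹) :
    exp (-1) * log (b⁻¹ / 3) ≤ ∫ s in Ioi 2, exp (-(b * s)) / √(s ^ 2 - 4) := by
  have hint := integrableOn_exp_neg_mul_div_sqrt hb
  have hsub : Ioc 3 b⁻¹ ⊆ Ioi 2 := fun s hs => (by norm_num : (2 : ℝ) < 3).trans hs.1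
  calc exp (-1) * log (b⁻¹ / 3) = ∫ s in Ioc 3 b⁻¹, exp (-1) * s⁻¹ := by
        rw [← intervalIntegral.integral_of_le hb3, intervalIntegral.integral_const_mul,
          integral_inv (by rw [uIcc_of_le hb3]; intro h; linarith [h.1])]
    _ ≤ ∫ s in Ioc 3 b⁻¹, exp (-(b * s)) / √(s ^ 2 - 4) := by
        refine setIntegral_mono_on ?_ (hint.mono_set hsub) measurableSet_Ioc
          fun s ⟨hs3, hsb⟩ => ?_
        · exact (continuousOn_const.mul (continuousOn_inv₀.mono fun s hs => by
            simp only [mem_compl_iff, mem_singleton_iff]; linarith [hs.1])).integrableOn_compact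
            isCompact_Icc |>.mono_set Ioc_subset_Icc_self
        · have hroot : 0 < √(s ^ 2 - 4) := Real.sqrt_pos.2 (by nlinarith)
          have hbs : b * s ≤ 1 := by
            calc b * s ≤ b * b⁻¹ := by gcongr
              _ = 1 := mul_inv_cancel₀ hb.ne'
          rw [← div_eq_mul_inv]
          exact div_le_div₀ (exp_pos _).le (exp_le_exp.2 (by linarith)) hroot
            (sqrt_sq_sub_four_le (by linarith))
    _ ≤ ∫ s in Ioi 2, exp (-(b * s)) / √(s ^ 2 - 4) :=
        setIntegral_mono_set hint (ae_of_all _ fun s => by positivity) hsub.eventuallyLE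

lemma tendsto_integral_exp_neg_mul_div_sqrt_nhdsGT_zero :
    Tendsto (fun b => ∫ s in Ioi 2, exp (-(b * s)) / √(s ^ 2 - 4)) (𝓝[>] 0) atTop := by
  have hlog : Tendsto (fun b : ℝ => exp (-1) * log (b⁻¹ / 3)) (𝓝[>] 0) atTop :=
    (tendsto_log_atTop.comp (tendsto_inv_nhdsGT_zero.atTop_div_const (by norm_num))).const_mul_atTop
      (exp_pos _)
  refine tendsto_atTop_mono' _ ?_ hlog
  filter_upwards [self_mem_nhdsWithin, tendsto_inv_nhdsGT_zero.eventually_ge_atTop 3]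
    with b (hb : 0 < b) hb3
  exact exp_neg_one_mul_log_le_integral_exp_neg_mul_div_sqrt hb hb3

theorem deriv_area_cdf_tendsto_atTop :
    (∀ a : ℝ, 0 < a →
      HasDerivAt (fun a : ℝ => ∫ x in Set.Ioi (0:ℝ), ∫ y in Set.Ioo 0 (a/x), Real.exp (-x - y))
        ((1/2) * ∫ s in Set.Ioi (2:ℝ),
          Real.exp (-(Real.sqrt a * s)) * (Real.sqrt a * s - 2) * Real.sqrt (s^2 - 4)) a) ∧
    Tendsto (fun a : ℝ =>
        (1/2) * ∫ s in Set.Ioi (2:ℝ),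
          Real.exp (-(Real.sqrt a * s)) * (Real.sqrt a * s - 2) * Real.sqrt (s^2 - 4))
      (nhdsWithin 0 (Set.Ioi 0)) atTop := by
  have hval (a : ℝ) (ha : 0 < a) :
      (1 / 2) * ∫ s in Ioi 2, exp (-(√a * s)) * (√a * s - 2) * √(s ^ 2 - 4) =
        2 * ∫ s in Ioi 2, exp (-(√a * s)) / √(s ^ 2 - 4) := by
    rw [integral_exp_neg_mul_mul_sqrt (sqrt_pos.2 ha)]
    ring
  refine ⟨fun a ha => ?_, ?_⟩
  · rw [hval a ha, ← integral_inv_mul_exp_neg_sub_sq_div (sqrt_pos.2 ha), sq_sqrt ha.le]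
    refine (hasDerivAt_integral_exp_neg_sub_exp_neg_sub_div ha).congr_of_eventuallyEq ?_
    filter_upwards [Ioi_mem_nhds ha] with a' (ha' : 0 < a')
    exact setIntegral_congr_fun measurableSet_Ioi fun x (hx : 0 < x) =>
      integral_Ioo_exp_neg_sub (div_pos ha' hx).le
  · have hsqrt : Tendsto (√·) (𝓝[>] 0) (𝓝[>] 0) :=
      tendsto_nhdsWithin_of_tendsto_nhds_of_eventually_within _
        (by simpa using (continuous_sqrt.tendsto 0).mono_left nhdsWithin_le_nhds)
        (eventually_nhdsWithin_of_forall fun a (ha : 0 < a) => sqrt_pos.2 ha)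
    refine ((tendsto_integral_exp_neg_mul_div_sqrt_nhdsGT_zero.comp hsqrt).const_mul_atTop
      two_pos).congr' ?_
    filter_upwards [self_mem_nhdsWithin] with a (ha : 0 < a)
    exact (hval a ha).symm
end

section
/- Let X, Y be independent exponential random variables with rates γ₁ > γ₂ > 0, σ = 2 min(X,Y)/(X+Y), P = X+Y. Then for 0 < ε < 1, lim_{p→0⁺} P(σ > ε | P < p) = 1 - ε. -/
/-!
Conditioned on `X + Y < p`, the pair `(X, Y)` has a density proportional to
`exp (-(γ₁ x + γ₂ y))` on the triangle `x, y ≥ 0, x + y < p`. There this density lies within a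
factor `exp ((γ₁ + γ₂) p)` of a constant, so the conditional probability of `σ > ε` is within that
factor of its value for the uniform law on the triangle, and the factor tends to `1` as `p → 0`.

Under the uniform law on the triangle, `σ` is uniform on `[0, 1]`: after the shear
`(x, y) ↦ (x, x + y)`, the slice of `{σ > ε}` at height `s` is `(ε s / 2, (1 - ε / 2) s)`, a
fraction `1 - ε` of the slice `[0, s]` of the triangle.
-/

open MeasureTheory ProbabilityTheory Real Filter Set Topology
open scoped ENNReal

def cornerTriangle (p : ℝ) : Set (ℝ × ℝ) := {z | 0 ≤ z.1 ∧ 0 ≤ z.2 ∧ z.1 + z.2 < p}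

noncomputable def shapeRatio (z : ℝ × ℝ) : ℝ := 2 * min z.1 z.2 / (z.1 + z.2)

lemma measurableSet_cornerTriangle (p : ℝ) : MeasurableSet (cornerTriangle p) := by
  unfold cornerTriangle; measurability

lemma measurableSet_lt_shapeRatio (ε : ℝ) :
    MeasurableSet {z : ℝ × ℝ | ε < shapeRatio z} := by
  unfold shapeRatio; measurability

section conditioning

variable {α : Type*} [MeasurableSpace α] {μ : Measure α} {f : α → ℝ≥0∞} {s t : Set α}

lemma toReal_cond_apply (hs : MeasurableSet s) (t : Set α) :
    (μ[t|s]).toReal = (μ (s ∩ t)).toReal / (μ s).toReal := by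
  rw [cond_apply hs, ENNReal.toReal_mul, ENNReal.toReal_inv, inv_mul_eq_div]

lemma cond_congr_set (h : s =ᵐ[μ] t) : μ[|s] = μ[|t] := by
  rw [ProbabilityTheory.cond, ProbabilityTheory.cond, measure_congr h,
    Measure.restrict_congr_set h]

lemma cond_map_apply {β : Type*} [MeasurableSpace β] {Z : α → β} (hZ : Measurable Z)
    {s t : Set β} (hs : MeasurableSet s) (ht : MeasurableSet t) :
    (μ.map Z)[t|s] = μ[Z ⁻¹' t|Z ⁻¹' s] := by
  rw [cond_apply hs, cond_apply (hZ hs), Measure.map_apply hZ hs,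
    Measure.map_apply hZ (hs.inter ht), preimage_inter]

lemma toReal_withDensity_apply_mem_Icc (hs : MeasurableSet s) (hμs : μ s ≠ ∞) {m M : ℝ}
    (hm : 0 ≤ m) (hM : 0 ≤ M) (hf : ∀ x ∈ s, ENNReal.ofReal m ≤ f x ∧ f x ≤ ENNReal.ofReal M) :
    (μ.withDensity f s).toReal ∈ Icc (m * (μ s).toReal) (M * (μ s).toReal) := by
  have hlower : ENNReal.ofReal m * μ s ≤ μ.withDensity f s := by
    rw [withDensity_apply _ hs, ← setLIntegral_const]
    exact setLIntegral_mono' hs fun x hx ↦ (hf x hx).1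
  have hupper : μ.withDensity f s ≤ ENNReal.ofReal M * μ s := by
    rw [withDensity_apply _ hs, ← setLIntegral_const]
    exact setLIntegral_mono' hs fun x hx ↦ (hf x hx).2
  have hfin : ENNReal.ofReal M * μ s ≠ ∞ := ENNReal.mul_ne_top ENNReal.ofReal_ne_top hμs
  constructor
  · simpa [ENNReal.toReal_mul, hm] using
      ENNReal.toReal_mono (ne_top_of_le_ne_top hfin hupper) hlower
  · simpa [ENNReal.toReal_mul, hM] using ENNReal.toReal_mono hfin hupper

lemma toReal_cond_withDensity_mem_Icc [SFinite μ] (ht : MeasurableSet t) (hs : MeasurableSet s)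
    (hμt : μ t ≠ 0) (hμt' : μ t ≠ ∞) {m M : ℝ} (hm : 0 < m)
    (hf : ∀ x ∈ t, ENNReal.ofReal m ≤ f x ∧ f x ≤ ENNReal.ofReal M) :
    ((μ.withDensity f)[s|t]).toReal ∈
      Icc (m / M * (μ[s|t]).toReal) (M / m * (μ[s|t]).toReal) := by
  obtain ⟨x, hx⟩ := nonempty_of_measure_ne_zero hμt
  have hmM : m ≤ M := by
    have := (hf x hx).1.trans (hf x hx).2
    rw [ENNReal.ofReal_le_ofReal_iff'] at this
    exact this.resolve_right hm.not_ge
  have hst := toReal_withDensity_apply_mem_Icc (ht.inter hs)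
    (measure_ne_top_of_subset inter_subset_left hμt') hm.le (hm.le.trans hmM)
    fun y hy ↦ hf y hy.1
  have htt := toReal_withDensity_apply_mem_Icc ht hμt' hm.le (hm.le.trans hmM) hf
  have hb : 0 < (μ t).toReal := ENNReal.toReal_pos hμt hμt'
  rw [toReal_cond_apply ht, toReal_cond_apply ht, div_mul_div_comm, div_mul_div_comm]
  constructor
  · exact div_le_div₀ ENNReal.toReal_nonneg hst.1 ((mul_pos hm hb).trans_le htt.1) htt.2
  · exact div_le_div₀ (mul_nonneg (hm.le.trans hmM) ENNReal.toReal_nonneg) hst.2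
      (mul_pos hm hb) htt.1

end conditioning

lemma volume_preimage_shear {C : Set (ℝ × ℝ)} (hC : MeasurableSet C) :
    volume ((fun z : ℝ × ℝ => (z.1, z.1 + z.2)) ⁻¹' C) = volume C :=
  (measurePreserving_prod_add volume volume).measure_preimage hC.nullMeasurableSet

lemma volume_eq_of_volume_slice {C : Set (ℝ × ℝ)} (hC : MeasurableSet C) {c p : ℝ} (hc : 0 ≤ c)
    (hp : 0 ≤ p) (hin : ∀ s ∈ Ioo 0 p, volume ((·, s) ⁻¹' C) = ENNReal.ofReal (c * s))
    (hout : ∀ s ∉ Ioo 0 p, volume ((·, s) ⁻¹' C) = 0) :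
    volume C = ENNReal.ofReal (c * (p ^ 2 / 2)) := by
  have hslice : ∀ s,
      volume ((·, s) ⁻¹' C) = (Ioo 0 p).indicator (fun s ↦ ENNReal.ofReal (c * s)) s := by
    intro s
    by_cases hs : s ∈ Ioo 0 p
    · rw [indicator_of_mem hs, hin s hs]
    · rw [indicator_of_notMem hs, hout s hs]
  rw [Measure.volume_eq_prod, Measure.prod_apply_symm hC, lintegral_congr hslice,
    lintegral_indicator measurableSet_Ioo, ← ofReal_integral_eq_lintegral_ofReal,
    ← integral_Ioc_eq_integral_Ioo, ← intervalIntegral.integral_of_le hp,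
    intervalIntegral.integral_const_mul, integral_id]
  · ring_nf
  · exact (continuous_const.mul continuous_id).integrableOn_Icc.mono_set Ioo_subset_Icc_self
  · filter_upwards [ae_restrict_mem measurableSet_Ioo] with s hs
    exact mul_nonneg hc hs.1.le

lemma volume_cornerTriangle {p : ℝ} (hp : 0 ≤ p) :
    volume (cornerTriangle p) = ENNReal.ofReal (p ^ 2 / 2) := by
  set C : Set (ℝ × ℝ) := {w | 0 ≤ w.1 ∧ w.1 ≤ w.2 ∧ w.2 < p}
  have hC : MeasurableSet C := by unfold C; measurability
  have hpre : (fun z : ℝ × ℝ => (z.1, z.1 + z.2)) ⁻¹' C = cornerTriangle p := by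
    ext z; simp [C, cornerTriangle]
  rw [← hpre, volume_preimage_shear hC, ← one_mul (p ^ 2 / 2)]
  refine volume_eq_of_volume_slice hC zero_le_one hp (fun s hs ↦ ?_) (fun s hs ↦ ?_)
  · have : (·, s) ⁻¹' C = Icc 0 s := by ext x; simp [C, hs.2]
    rw [this, Real.volume_Icc, sub_zero, one_mul]
  · rw [mem_Ioo, not_and_or, not_lt, not_lt] at hs
    rcases hs with hs | hs
    · refine measure_mono_null (fun x hx ↦ ?_) (measure_singleton (0 : ℝ))
      obtain ⟨h0, hxs, -⟩ := hx
      exact le_antisymm (hxs.trans hs) h0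
    · convert measure_empty (μ := (volume : Measure ℝ))
      ext x; simp only [C, mem_preimage, mem_ofPred_eq, mem_empty_iff_false, iff_false]
      intro h; linarith [h.2.2]

lemma volume_cornerTriangle_inter_shapeRatio {p ε : ℝ} (hp : 0 ≤ p) (hε0 : 0 < ε)
    (hε1 : ε < 1) :
    volume (cornerTriangle p ∩ {z | ε < shapeRatio z}) =
      ENNReal.ofReal ((1 - ε) * (p ^ 2 / 2)) := by
  set C : Set (ℝ × ℝ) :=
    {w | 0 ≤ w.1 ∧ 0 ≤ w.2 - w.1 ∧ w.2 < p ∧ ε < 2 * min w.1 (w.2 - w.1) / w.2}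
  have hC : MeasurableSet C := by unfold C; measurability
  have hpre : (fun z : ℝ × ℝ => (z.1, z.1 + z.2)) ⁻¹' C =
      cornerTriangle p ∩ {z | ε < shapeRatio z} := by
    ext z; simp [C, cornerTriangle, shapeRatio, and_assoc]
  rw [← hpre, volume_preimage_shear hC]
  refine volume_eq_of_volume_slice hC (by linarith) hp (fun s hs ↦ ?_) (fun s hs ↦ ?_)
  · have : (·, s) ⁻¹' C = Ioo (ε / 2 * s) ((1 - ε / 2) * s) := by
      ext x
      simp only [C, mem_preimage, mem_ofPred_eq, mem_Ioo, lt_div_iff₀ hs.1, hs.2, true_and,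
        mul_min_of_nonneg _ _ (zero_le_two : (0:ℝ) ≤ 2), lt_min_iff]
      constructor
      · rintro ⟨-, -, h1, h2⟩; constructor <;> linarith
      · rintro ⟨h1, h2⟩; refine ⟨?_, ?_, ?_, ?_⟩ <;> nlinarith [hs.1]
    rw [this, Real.volume_Ioo]; congr 1; ring
  · convert measure_empty (μ := (volume : Measure ℝ))
    ext x; simp only [C, mem_preimage, mem_ofPred_eq, mem_empty_iff_false, iff_false]
    rintro ⟨h0, hxs, hsp, hε⟩
    rw [mem_Ioo, not_and_or, not_lt, not_lt] at hs
    rcases hs with hs | hs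
    · have : s = 0 := by linarith
      rw [this, div_zero] at hε; linarith
    · linarith

lemma toReal_volume_cond_cornerTriangle {p ε : ℝ} (hp : 0 < p) (hε0 : 0 < ε) (hε1 : ε < 1) :
    (volume[{z | ε < shapeRatio z}|cornerTriangle p]).toReal = 1 - ε := by
  rw [toReal_cond_apply (measurableSet_cornerTriangle p),
    volume_cornerTriangle_inter_shapeRatio hp.le hε0 hε1, volume_cornerTriangle hp.le,
    ENNReal.toReal_ofReal (by nlinarith), ENNReal.toReal_ofReal (by positivity)]
  field_simp

section exponential

variable {γ₁ γ₂ : ℝ}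

lemma expMeasure_prod_expMeasure :
    (expMeasure γ₁).prod (expMeasure γ₂) =
      volume.withDensity fun z ↦ exponentialPDF γ₁ z.1 * exponentialPDF γ₂ z.2 :=
  prod_withDensity (measurable_exponentialPDFReal γ₁).ennreal_ofReal
    (measurable_exponentialPDFReal γ₂).ennreal_ofReal

lemma ae_nonneg_expMeasure_prod :
    ∀ᵐ z ∂(expMeasure γ₁).prod (expMeasure γ₂), 0 ≤ z.1 ∧ 0 ≤ z.2 := by
  rw [expMeasure_prod_expMeasure, ae_withDensity_iff (by unfold exponentialPDF; fun_prop)]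
  refine ae_of_all _ fun z hz ↦ ⟨le_of_not_gt fun h ↦ hz ?_, le_of_not_gt fun h ↦ hz ?_⟩
  · rw [exponentialPDF_of_neg h, zero_mul]
  · rw [exponentialPDF_of_neg h, mul_zero]

lemma exponentialPDF_mul_mem_Icc (hγ₁ : 0 < γ₁) (hγ₂ : 0 < γ₂) {p : ℝ} {z : ℝ × ℝ}
    (hz : z ∈ cornerTriangle p) :
    ENNReal.ofReal (γ₁ * γ₂ * rexp (-(γ₁ + γ₂) * p)) ≤
        exponentialPDF γ₁ z.1 * exponentialPDF γ₂ z.2 ∧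
      exponentialPDF γ₁ z.1 * exponentialPDF γ₂ z.2 ≤ ENNReal.ofReal (γ₁ * γ₂) := by
  obtain ⟨hx, hy, hxy⟩ := hz
  rw [exponentialPDF_of_nonneg hx, exponentialPDF_of_nonneg hy,
    ← ENNReal.ofReal_mul (by positivity), mul_mul_mul_comm, ← Real.exp_add]
  constructor <;> apply ENNReal.ofReal_le_ofReal
  · gcongr; nlinarith
  · refine mul_le_of_le_one_right (by positivity) (Real.exp_le_one_iff.mpr ?_)
    nlinarith

lemma toReal_cond_expMeasure_prod_mem_Icc (hγ₁ : 0 < γ₁) (hγ₂ : 0 < γ₂) {p ε : ℝ}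
    (hp : 0 < p) (hε0 : 0 < ε) (hε1 : ε < 1) :
    (((expMeasure γ₁).prod (expMeasure γ₂))[{z | ε < shapeRatio z}|{z | z.1 + z.2 < p}]).toReal
      ∈ Icc (rexp (-(γ₁ + γ₂) * p) * (1 - ε)) (rexp ((γ₁ + γ₂) * p) * (1 - ε)) := by
  have hT : {z : ℝ × ℝ | z.1 + z.2 < p} =ᵐ[(expMeasure γ₁).prod (expMeasure γ₂)]
      cornerTriangle p := by
    filter_upwards [ae_nonneg_expMeasure_prod] with z hz
    exact propext ⟨fun h ↦ ⟨hz.1, hz.2, h⟩, fun h ↦ h.2.2⟩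
  rw [cond_congr_set hT, expMeasure_prod_expMeasure]
  have hpinch := toReal_cond_withDensity_mem_Icc (μ := volume) (measurableSet_cornerTriangle p)
    (measurableSet_lt_shapeRatio ε) (by simp [volume_cornerTriangle hp.le]; positivity)
    (by simp [volume_cornerTriangle hp.le]) (by positivity)
    fun z hz ↦ exponentialPDF_mul_mem_Icc hγ₁ hγ₂ hz
  rw [toReal_volume_cond_cornerTriangle hp hε0 hε1] at hpinch
  convert hpinch using 3
  · field_simp
  · rw [neg_mul, Real.exp_neg]; field_simp

end exponential

theorem cond_shape_small_perimeter_limit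
    {Ω : Type*} [MeasurableSpace Ω] (μ : Measure Ω) [IsProbabilityMeasure μ]
    (γ₁ γ₂ : ℝ) (hγ₂ : 0 < γ₂) (hγ : γ₂ < γ₁) (X Y : Ω → ℝ)
    (hX : Measurable X) (hY : Measurable Y)
    (hXd : μ.map X = expMeasure γ₁) (hYd : μ.map Y = expMeasure γ₂)
    (hind : IndepFun X Y μ) (ε : ℝ) (hε0 : 0 < ε) (hε1 : ε < 1) :
    Tendsto (fun p : ℝ =>
        ((μ[|{ω | X ω + Y ω < p}]) {ω | 2 * min (X ω) (Y ω) / (X ω + Y ω) > ε}).toReal)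
      (nhdsWithin 0 (Set.Ioi 0)) (nhds (1 - ε)) := by
  have hlaw : μ.map (fun ω ↦ (X ω, Y ω)) = (expMeasure γ₁).prod (expMeasure γ₂) := by
    rw [← hXd, ← hYd]
    exact (indepFun_iff_map_prod_eq_prod_map_map hX.aemeasurable hY.aemeasurable).mp hind
  have hbounds : ∀ p ∈ Ioi (0 : ℝ),
      ((μ[|{ω | X ω + Y ω < p}]) {ω | 2 * min (X ω) (Y ω) / (X ω + Y ω) > ε}).toReal ∈
        Icc (rexp (-(γ₁ + γ₂) * p) * (1 - ε)) (rexp ((γ₁ + γ₂) * p) * (1 - ε)) := by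
    intro p hp
    have := toReal_cond_expMeasure_prod_mem_Icc (hγ₂.trans hγ) hγ₂ hp hε0 hε1
    rwa [← hlaw, cond_map_apply (hX.prodMk hY) (by measurability)
      (measurableSet_lt_shapeRatio ε)] at this
  have hlim (c : ℝ) : Tendsto (fun p ↦ rexp (c * p) * (1 - ε)) (𝓝[>] 0) (𝓝 (1 - ε)) :=
    ((by fun_prop : Continuous fun p ↦ rexp (c * p) * (1 - ε)).tendsto' 0 _ (by simp)).mono_left
      nhdsWithin_le_nhds
  refine tendsto_of_tendsto_of_tendsto_of_le_of_le' (hlim (-(γ₁ + γ₂))) (hlim (γ₁ + γ₂)) ?_ ?_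
  · filter_upwards [self_mem_nhdsWithin] with p hp using (hbounds p hp).1
  · filter_upwards [self_mem_nhdsWithin] with p hp using (hbounds p hp).2
end

section
/- Let X, Y be independent exponential random variables with rate γ. Then conditionally on X+Y < p, the variable σ = 2 min(X,Y)/(X+Y) is uniformly distributed on [0,1]: for all 0 ≤ ε ≤ 1, P(σ ≤ ε | X+Y < p) = ε. -/
/-!
Under the shear `(x, y) ↦ (x, x + y)` the product of two `Exp(γ)` densities becomes
`γ² e^{-γ s}` on `{0 ≤ x ≤ s}`, which does not depend on `x`: given `X + Y = s`, `X` is uniform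
on `[0, s]`. Since `σ = 2 min(x, s - x) / s`, the event `σ ≤ ε` removes from `[0, s]` the middle
interval `(ε s / 2, s - ε s / 2)`, leaving length `ε s`. Integrating over `s < p` gives
`P(X + Y < p, σ ≤ ε) = ε ∫_{s < p} γ² s e^{-γ s} ds = ε P(X + Y < p)`.
-/

open MeasureTheory ProbabilityTheory Real Set

open scoped ENNReal

theorem MeasureTheory.Measure.map_prod_add_withDensity {G : Type*} [MeasurableSpace G]
    [AddCommGroup G] [MeasurableAdd₂ G] [MeasurableNeg G] (ν : Measure G) [SFinite ν]
    [ν.IsAddLeftInvariant] {f g : G → ℝ≥0∞} (hf : Measurable f) (hg : Measurable g) :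
    ((ν.withDensity f).prod (ν.withDensity g)).map (fun z => (z.1, z.1 + z.2)) =
      (ν.prod ν).withDensity (fun w => f w.1 * g (w.2 - w.1)) := by
  have hshear := measurePreserving_prod_add ν ν
  ext T hT
  rw [Measure.map_apply hshear.measurable hT, prod_withDensity hf hg,
    withDensity_apply _ (hshear.measurable hT), withDensity_apply _ hT,
    ← hshear.setLIntegral_comp_preimage_emb (MeasurableEquiv.shearAddRight G).measurableEmbedding
      (fun w => f w.1 * g (w.2 - w.1)) T]
  simp only [add_sub_cancel_left]

theorem ProbabilityTheory.IndepFun.map_prodMk_add_eq {Ω G : Type*} [MeasurableSpace Ω]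
    [MeasurableSpace G] [Add G] [MeasurableAdd₂ G] {μ : Measure Ω} [IsFiniteMeasure μ]
    {X Y : Ω → G} (hind : IndepFun X Y μ) (hX : Measurable X) (hY : Measurable Y) :
    μ.map (fun ω => (X ω, X ω + Y ω)) =
      ((μ.map X).prod (μ.map Y)).map (fun z => (z.1, z.1 + z.2)) := by
  rw [← (indepFun_iff_map_prod_eq_prod_map_map hX.aemeasurable hY.aemeasurable).1 hind,
    Measure.map_map (by fun_prop) (hX.prodMk hY)]
  rfl

theorem exponentialPDF_mul_exponentialPDF_sub {γ : ℝ} (hγ : 0 ≤ γ) (x s : ℝ) :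
    exponentialPDF γ x * exponentialPDF γ (s - x) =
      (Icc 0 s).indicator (fun _ => ENNReal.ofReal (γ ^ 2 * exp (-(γ * s)))) x := by
  by_cases hx : x ∈ Icc 0 s
  · rw [indicator_of_mem hx, exponentialPDF_of_nonneg hx.1,
      exponentialPDF_of_nonneg (sub_nonneg.2 hx.2), ← ENNReal.ofReal_mul (by positivity),
      ← mul_mul_mul_comm, ← exp_add]
    ring_nf
  · rw [indicator_of_notMem hx]
    rcases not_and_or.1 hx with hx | hx
    · rw [exponentialPDF_of_neg (not_le.1 hx), zero_mul]
    · rw [exponentialPDF_of_neg (sub_neg.2 (not_le.1 hx)), mul_zero]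

theorem expMeasure_prod_map_add_apply {γ : ℝ} (hγ : 0 ≤ γ) {T : Set (ℝ × ℝ)}
    (hT : MeasurableSet T) :
    ((expMeasure γ).prod (expMeasure γ)).map (fun z => (z.1, z.1 + z.2)) T =
      ∫⁻ s, ENNReal.ofReal (γ ^ 2 * exp (-(γ * s))) * volume (Icc 0 s ∩ (·, s) ⁻¹' T) := by
  have hpdf : Measurable (exponentialPDF γ) := (measurable_exponentialPDFReal γ).ennreal_ofReal
  rw [show expMeasure γ = volume.withDensity (exponentialPDF γ) from rfl,
    Measure.map_prod_add_withDensity volume hpdf hpdf, withDensity_apply _ hT,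
    ← lintegral_indicator hT, lintegral_prod_symm _ (by fun_prop)]
  refine lintegral_congr fun s => ?_
  have hsection :
      (fun x => T.indicator (fun w => exponentialPDF γ w.1 * exponentialPDF γ (w.2 - w.1)) (x, s)) =
        (Icc 0 s ∩ (·, s) ⁻¹' T).indicator (fun _ => ENNReal.ofReal (γ ^ 2 * exp (-(γ * s)))) := by
    ext x
    rw [inter_comm, ← indicator_indicator,
      ← funext (exponentialPDF_mul_exponentialPDF_sub hγ · s)]
    exact (indicator_comp_right (fun x => (x, s))).symm
  rw [hsection, lintegral_indicator_const (measurableSet_Icc.inter (measurable_prodMk_right hT))]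

theorem measure_preimage_prodMk_add_inter_snd_lt {Ω : Type*} [MeasurableSpace Ω]
    {μ : Measure Ω} [IsFiniteMeasure μ] {γ : ℝ} (hγ : 0 ≤ γ) {X Y : Ω → ℝ}
    (hX : Measurable X) (hY : Measurable Y) (hXd : μ.map X = expMeasure γ)
    (hYd : μ.map Y = expMeasure γ) (hind : IndepFun X Y μ) {T : Set (ℝ × ℝ)}
    (hT : MeasurableSet T) (p : ℝ) :
    μ ((fun ω => (X ω, X ω + Y ω)) ⁻¹' (T ∩ {w | w.2 < p})) =
      ∫⁻ s in Iio p, ENNReal.ofReal (γ ^ 2 * exp (-(γ * s))) * volume (Icc 0 s ∩ (·, s) ⁻¹' T) := by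
  have hTp : MeasurableSet (T ∩ {w : ℝ × ℝ | w.2 < p}) :=
    hT.inter (measurableSet_lt measurable_snd measurable_const)
  rw [← Measure.map_apply (by fun_prop) hTp, hind.map_prodMk_add_eq hX hY, hXd, hYd,
    expMeasure_prod_map_add_apply hγ hTp, ← lintegral_indicator measurableSet_Iio]
  refine lintegral_congr fun s => ?_
  by_cases hs : s < p <;> simp [hs]

theorem volume_Icc_inter_two_mul_min_div_le {ε : ℝ} (hε0 : 0 ≤ ε) (hε1 : ε ≤ 1) (s : ℝ) :
    volume (Icc 0 s ∩ {x | 2 * min x (s - x) / s ≤ ε}) = ENNReal.ofReal (ε * s) := by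
  rcases le_or_gt s 0 with hs | hs
  · rw [ENNReal.ofReal_of_nonpos (mul_nonpos_of_nonneg_of_nonpos hε0 hs), ← nonpos_iff_eq_zero]
    calc volume (Icc 0 s ∩ _) ≤ volume (Icc 0 s) := measure_mono inter_subset_left
      _ = 0 := by simp [hs]
  have hmiddle : Icc 0 s ∩ {x | 2 * min x (s - x) / s ≤ ε} =
      Icc 0 s \ Ioo (ε * s / 2) (s - ε * s / 2) := by
    ext x
    simp only [mem_inter_iff, mem_Icc, mem_ofPred_eq, mem_sdiff, mem_Ioo, div_le_iff₀ hs]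
    refine ⟨fun ⟨hx, h⟩ => ⟨hx, fun ⟨h1, h2⟩ => ?_⟩, fun ⟨hx, h⟩ => ⟨hx, ?_⟩⟩
    · rcases min_cases x (s - x) with ⟨hm, -⟩ | ⟨hm, -⟩ <;> rw [hm] at h <;> linarith
    · rcases not_and_or.1 h with h | h
      · linarith [min_le_left x (s - x)]
      · linarith [min_le_right x (s - x)]
  rw [hmiddle, measure_sdiff (Ioo_subset_Icc_self.trans (Icc_subset_Icc (by positivity)
      (by nlinarith))) measurableSet_Ioo.nullMeasurableSet measure_Ioo_lt_top.ne,
    Real.volume_Icc, Real.volume_Ioo, ← ENNReal.ofReal_sub _ (by nlinarith)]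
  ring_nf

theorem setLIntegral_Iio_ofReal_mul_pos {γ p : ℝ} (hγ : γ ≠ 0) (hp : 0 < p) :
    0 < ∫⁻ s in Iio p, ENNReal.ofReal (γ ^ 2 * exp (-(γ * s))) * ENNReal.ofReal s := by
  rw [setLIntegral_pos_iff (by fun_prop)]
  calc (0 : ℝ≥0∞) < volume (Ioo 0 p) := by simpa using hp
    _ ≤ _ := by
      refine measure_mono fun s hs => ⟨?_, hs.2⟩
      simp [hs.1, hγ, sq_pos_of_ne_zero, exp_pos]

theorem cond_shape_uniform_cdf
    {Ω : Type*} [MeasurableSpace Ω] (μ : Measure Ω) [IsProbabilityMeasure μ]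
    (γ : ℝ) (hγ : 0 < γ) (X Y : Ω → ℝ)
    (hX : Measurable X) (hY : Measurable Y)
    (hXd : μ.map X = expMeasure γ) (hYd : μ.map Y = expMeasure γ)
    (hind : IndepFun X Y μ) (p : ℝ) (hp : 0 < p) :
    ∀ ε : ℝ, 0 ≤ ε → ε ≤ 1 →
      (μ[|{ω | X ω + Y ω < p}]) {ω | 2 * min (X ω) (Y ω) / (X ω + Y ω) ≤ ε} =
        ENNReal.ofReal ε := by
  intro ε hε0 hε1
  have hlaw {T : Set (ℝ × ℝ)} (hT : MeasurableSet T) :=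
    measure_preimage_prodMk_add_inter_snd_lt hγ.le hX hY hXd hYd hind hT p
  set I := ∫⁻ s in Iio p, ENNReal.ofReal (γ ^ 2 * exp (-(γ * s))) * ENNReal.ofReal s
  have hB : μ {ω | X ω + Y ω < p} = I := by
    simpa using hlaw MeasurableSet.univ
  have hBA : μ ({ω | X ω + Y ω < p} ∩ {ω | 2 * min (X ω) (Y ω) / (X ω + Y ω) ≤ ε}) =
      ENNReal.ofReal ε * I := by
    have hevent : {ω | X ω + Y ω < p} ∩ {ω | 2 * min (X ω) (Y ω) / (X ω + Y ω) ≤ ε} =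
        (fun ω => (X ω, X ω + Y ω)) ⁻¹'
          ({w | 2 * min w.1 (w.2 - w.1) / w.2 ≤ ε} ∩ {w | w.2 < p}) := by
      ext ω
      simp [and_comm]
    rw [hevent, hlaw (measurableSet_le (by fun_prop) measurable_const),
      ← lintegral_const_mul' _ _ ENNReal.ofReal_ne_top]
    refine setLIntegral_congr_fun measurableSet_Iio fun s _ => ?_
    rw [preimage_ofPred_eq, volume_Icc_inter_two_mul_min_div_le hε0 hε1, ENNReal.ofReal_mul hε0]
    ring
  have hI_ne_top : I ≠ ∞ := hB ▸ measure_ne_top μ _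
  rw [cond_apply (measurableSet_lt (by fun_prop) measurable_const), hB, hBA, mul_left_comm,
    ENNReal.inv_mul_cancel (setLIntegral_Iio_ofReal_mul_pos hγ.ne' hp).ne' hI_ne_top, mul_one]
end
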